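/- arXiv:2601.09649 — 7 statements merged into one kernel-verified Lean document; each statement's English description precedes it below -/
import Mathlib

section
/- Fix η > 0 and τ ∈ (0,1), and let p(s) = −(ητ²/2)·(s − 2/(ητ²))·(s − 2/η)·(s + 2η). Let z be the maximal solution of the ODE 8z'' = p'(z) with z(0) = 2/η and z'(0) = 0. Then z is defined on all of ℝ and satisfies: (i) 4·z'(y)² = p(z(y)) for all y ∈ ℝ; (ii) 2/η ≤ z(y) ≤ 2/(ητ²) for all y ∈ ℝ; (iii) z(−y) = z(y) for all y ∈ ℝ; (iv) the integral ϑ = ∫_{2/η}^{2/(ητ²)} 2/√(p(s)) ds is finite and positive, z is strictly increasing on [0,ϑ] with z(ϑ) = 2/(ητ²), and z(kϑ + y) = z(kϑ − y) for all y ∈ ℝ and all integers k; in particular z is periodic with period 2ϑ. -/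
/-!
Along a half period the energy identity `4z'² = p(z)` makes the equation separable,
`z' = √p(z)/2`, so on `[0, ϑ]` the solution is the inverse of the travel time
`x ↦ ∫_{2/η}^x 2/√p`; this is finite up to `x = 2/(ητ²)` because `p` vanishes only to first
order at the ends of `[2/η, 2/(ητ²)]`. Extending this arc evenly and `2ϑ`-periodically gives
the global solution: at the turning points the energy identity forces `z' → 0`, and the
derivative-limit theorem shows that the glued function still satisfies `8z'' = p'(z)` there.
-/

open Set Filter Topology MeasureTheory Real

noncomputable section

theorem hasDerivAt_of_tendsto_nhdsNE {E : Type*} [NormedAddCommGroup E] [NormedSpace ℝ E]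
    {f f' : ℝ → E} {a : ℝ} {e : E}
    (hd : ∀ᶠ y in 𝓝[≠] a, HasDerivAt f (f' y) y) (hf : ContinuousAt f a)
    (he : Tendsto f' (𝓝[≠] a) (𝓝 e)) : HasDerivAt f e a := by
  have hderiv : deriv f =ᶠ[𝓝[≠] a] f' := hd.mono fun y hy => hy.deriv
  have hdiff : DifferentiableOn ℝ f {y | HasDerivAt f (f' y) y} := fun y hy =>
    hy.differentiableAt.differentiableWithinAt
  have hright : HasDerivWithinAt f e (Ici a) a :=
    hasDerivWithinAt_Ici_of_tendsto_deriv hdiff hf.continuousWithinAt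
      (nhdsGT_le_nhdsNE a hd) ((he.congr' hderiv.symm).mono_left (nhdsGT_le_nhdsNE a))
  have hleft : HasDerivWithinAt f e (Iic a) a :=
    hasDerivWithinAt_Iic_of_tendsto_deriv hdiff hf.continuousWithinAt
      (nhdsLT_le_nhdsNE a hd) ((he.congr' hderiv.symm).mono_left (nhdsLT_le_nhdsNE a))
  simpa using hleft.union hright

theorem integrableOn_inv_sqrt_mul_sub {a b : ℝ} (hab : a < b) :
    IntegrableOn (fun s => (√((s - a) * (b - s)))⁻¹) (Ioc a b) := by
  set u : ℝ → ℝ := fun s => (2 * s - (a + b)) / (b - a)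
  have hba : 0 < b - a := sub_pos.2 hab
  have hderiv : ∀ s ∈ Ioo a b,
      HasDerivAt (fun s => arcsin (u s)) (√((s - a) * (b - s)))⁻¹ s := by
    intro s ⟨has, hsb⟩
    have hu : HasDerivAt u (2 / (b - a)) s := by
      simpa using (((hasDerivAt_id s).const_mul 2).sub_const (a + b)).div_const (b - a)
    have hu1 : u s ≠ -1 := by
      simp only [u]; rw [ne_eq, div_eq_iff hba.ne']; linarith
    have hu2 : u s ≠ 1 := by
      simp only [u]; rw [ne_eq, div_eq_iff hba.ne']; linarith
    refine ((hasDerivAt_arcsin hu1 hu2).comp s hu).congr_deriv ?_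
    have h1 : 1 - u s ^ 2 = (2 / (b - a)) ^ 2 * ((s - a) * (b - s)) := by
      simp only [u]; field_simp; ring
    have hpos : 0 < √((s - a) * (b - s)) := sqrt_pos.2 (by nlinarith)
    rw [h1, sqrt_mul (by positivity), sqrt_sq (by positivity)]
    field_simp
  refine intervalIntegral.integrableOn_deriv_of_nonneg (by fun_prop) hderiv fun s _ => by positivity

theorem integrableOn_inv_sqrt_of_le {f : ℝ → ℝ} {a b K : ℝ} (hab : a < b) (hK : 0 < K)
    (hf : Measurable f) (hle : ∀ s ∈ Ioo a b, K * ((s - a) * (b - s)) ≤ f s) :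
    IntegrableOn (fun s => (√(f s))⁻¹) (Ioo a b) := by
  refine (((integrableOn_inv_sqrt_mul_sub hab).mono_set Ioo_subset_Ioc_self).const_mul
    (√K)⁻¹).mono' (by fun_prop) ((ae_restrict_iff' measurableSet_Ioo).2 (ae_of_all _ ?_))
  intro s hs
  have hpos : 0 < (s - a) * (b - s) := mul_pos (sub_pos.2 hs.1) (sub_pos.2 hs.2)
  rw [norm_of_nonneg (by positivity), ← mul_inv, ← sqrt_mul hK.le]
  gcongr
  exact hle s hs

section TravelTime

variable {a b : ℝ} {f : ℝ → ℝ}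

-- Extending by `1` outside `(a, b)` makes `travelTime` a strictly increasing bijection of `ℝ`,
-- so that its inverse is defined everywhere.
def extendByOne (a b : ℝ) (f : ℝ → ℝ) (s : ℝ) : ℝ := if s ∈ Ioo a b then f s else 1

def travelTime (a b : ℝ) (f : ℝ → ℝ) (x : ℝ) : ℝ := ∫ s in a..x, extendByOne a b f s

def travelTimeInv (a b : ℝ) (f : ℝ → ℝ) : ℝ → ℝ :=
  Function.invFun (travelTime a b f)

theorem extendByOne_eq_indicator :
    extendByOne a b f = (Ioo a b).indicator f + (Ioo a b)ᶜ.indicator 1 := by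
  funext s
  by_cases hs : s ∈ Ioo a b <;> simp [extendByOne, hs]

theorem extendByOne_of_notMem {s : ℝ} (hs : s ∉ Ioo a b) : extendByOne a b f s = 1 :=
  if_neg hs

theorem intervalIntegrable_extendByOne (hf : IntegrableOn f (Ioo a b)) (u v : ℝ) :
    IntervalIntegrable (extendByOne a b f) volume u v := by
  rw [extendByOne_eq_indicator]
  refine (((integrable_indicator_iff measurableSet_Ioo).2 hf).intervalIntegrable).add ?_
  exact intervalIntegrable_iff.2 (intervalIntegrable_const.def'.indicator measurableSet_Ioo.compl)

theorem extendByOne_pos (hpos : ∀ s ∈ Ioo a b, 0 < f s) (s : ℝ) :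
    0 < extendByOne a b f s := by
  unfold extendByOne
  split_ifs with hs
  exacts [hpos s hs, one_pos]

theorem travelTime_self : travelTime a b f a = 0 := intervalIntegral.integral_same

theorem strictMono_travelTime (hf : IntegrableOn f (Ioo a b)) (hpos : ∀ s ∈ Ioo a b, 0 < f s) :
    StrictMono (travelTime a b f) := by
  intro u v huv
  have hint := intervalIntegrable_extendByOne hf
  have := intervalIntegral.intervalIntegral_pos_of_pos (hint u v) (extendByOne_pos hpos) huv
  have hsub := intervalIntegral.integral_interval_sub_left (hint a v) (hint a u)
  simp only [travelTime] at *
  linarith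

theorem continuous_travelTime (hf : IntegrableOn f (Ioo a b)) : Continuous (travelTime a b f) :=
  intervalIntegral.continuous_primitive (intervalIntegrable_extendByOne hf) a

theorem travelTime_of_le {x : ℝ} (hx : x ≤ a) : travelTime a b f x = x - a := by
  have : ∀ s ∈ uIcc a x, extendByOne a b f s = 1 := fun s hs =>
    extendByOne_of_notMem fun h => by rw [uIcc_of_ge hx] at hs; linarith [hs.2, h.1]
  simp [travelTime, intervalIntegral.integral_congr this]

theorem travelTime_of_ge (hf : IntegrableOn f (Ioo a b)) {x : ℝ} (hx : b ≤ x) :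
    travelTime a b f x = travelTime a b f b + (x - b) := by
  have : ∀ s ∈ uIcc b x, extendByOne a b f s = 1 := fun s hs =>
    extendByOne_of_notMem fun h => by rw [uIcc_of_le hx] at hs; linarith [hs.1, h.2]
  have hint := intervalIntegrable_extendByOne hf
  rw [travelTime, travelTime, ← intervalIntegral.integral_add_adjacent_intervals (hint a b)
    (hint b x), intervalIntegral.integral_congr this]
  simp

theorem surjective_travelTime (hf : IntegrableOn f (Ioo a b)) :
    Function.Surjective (travelTime a b f) := by
  refine (continuous_travelTime hf).surjective ?_ ?_
  · have : Tendsto (fun x => travelTime a b f b + (x - b)) atTop atTop :=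
      tendsto_atTop_add_const_left _ _ (tendsto_atTop_add_const_right _ _ tendsto_id)
    refine this.congr' ?_
    filter_upwards [eventually_ge_atTop b] with x hx
    exact (travelTime_of_ge hf hx).symm
  · have : Tendsto (fun x => x - a) atBot atBot := tendsto_atBot_add_const_right _ _ tendsto_id
    refine this.congr' ?_
    filter_upwards [eventually_le_atBot a] with x hx
    exact (travelTime_of_le hx).symm

theorem travelTime_integral (hab : a ≤ b) :
    travelTime a b f b = ∫ s in a..b, f s := by
  rw [travelTime, intervalIntegral.integral_of_le hab, intervalIntegral.integral_of_le hab,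
    integral_Ioc_eq_integral_Ioo, integral_Ioc_eq_integral_Ioo]
  exact setIntegral_congr_fun measurableSet_Ioo fun s hs => if_pos hs

theorem travelTime_travelTimeInv (hf : IntegrableOn f (Ioo a b)) (t : ℝ) :
    travelTime a b f (travelTimeInv a b f t) = t :=
  Function.rightInverse_invFun (surjective_travelTime hf) t

theorem travelTimeInv_travelTime (hf : IntegrableOn f (Ioo a b))
    (hpos : ∀ s ∈ Ioo a b, 0 < f s) (x : ℝ) : travelTimeInv a b f (travelTime a b f x) = x :=
  Function.leftInverse_invFun (strictMono_travelTime hf hpos).injective x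

theorem travelTimeInv_zero (hf : IntegrableOn f (Ioo a b)) (hpos : ∀ s ∈ Ioo a b, 0 < f s) :
    travelTimeInv a b f 0 = a := by
  simpa [travelTime_self] using travelTimeInv_travelTime hf hpos a

theorem strictMono_travelTimeInv (hf : IntegrableOn f (Ioo a b))
    (hpos : ∀ s ∈ Ioo a b, 0 < f s) : StrictMono (travelTimeInv a b f) := fun t t' h =>
  (strictMono_travelTime hf hpos).lt_iff_lt.1 <| by
    rwa [travelTime_travelTimeInv hf, travelTime_travelTimeInv hf]

theorem continuous_travelTimeInv (hf : IntegrableOn f (Ioo a b))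
    (hpos : ∀ s ∈ Ioo a b, 0 < f s) : Continuous (travelTimeInv a b f) :=
  (strictMono_travelTimeInv hf hpos).monotone.continuous_of_surjective fun x =>
    ⟨_, travelTimeInv_travelTime hf hpos x⟩

theorem travelTimeInv_mem_Ioo (hf : IntegrableOn f (Ioo a b))
    (hpos : ∀ s ∈ Ioo a b, 0 < f s) {t : ℝ} (ht : t ∈ Ioo 0 (travelTime a b f b)) :
    travelTimeInv a b f t ∈ Ioo a b := by
  have hmono := strictMono_travelTimeInv hf hpos
  constructor
  · simpa [travelTimeInv_zero hf hpos] using hmono ht.1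
  · simpa [travelTimeInv_travelTime hf hpos] using hmono ht.2

theorem hasDerivAt_travelTimeInv (hf : IntegrableOn f (Ioo a b))
    (hpos : ∀ s ∈ Ioo a b, 0 < f s) (hcont : ContinuousOn f (Ioo a b)) {t : ℝ}
    (ht : t ∈ Ioo 0 (travelTime a b f b)) :
    HasDerivAt (travelTimeInv a b f) (f (travelTimeInv a b f t))⁻¹ t := by
  set x := travelTimeInv a b f t
  have hx : x ∈ Ioo a b := travelTimeInv_mem_Ioo hf hpos ht
  have hcont' : ContinuousOn (extendByOne a b f) (Ioo a b) := hcont.congr fun s hs => if_pos hs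
  have hG : HasDerivAt (travelTime a b f) (extendByOne a b f x) x :=
    intervalIntegral.integral_hasDerivAt_right (intervalIntegrable_extendByOne hf a x)
      (hcont'.stronglyMeasurableAtFilter isOpen_Ioo x hx)
      (hcont'.continuousAt (isOpen_Ioo.mem_nhds hx))
  rw [extendByOne, if_pos hx] at hG
  exact hG.of_local_left_inverse (continuous_travelTimeInv hf hpos).continuousAt (hpos x hx).ne'
    (Eventually.of_forall (travelTime_travelTimeInv hf))

end TravelTime

section TriangleWave

variable {T : ℝ}

-- The even `2T`-periodic function that equals `y` on `[0, T]`.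
def triangleWave (T y : ℝ) : ℝ := T / π * arccos (cos (π / T * y))

theorem continuous_triangleWave (T : ℝ) : Continuous (triangleWave T) := by
  unfold triangleWave; fun_prop

theorem triangleWave_neg (y : ℝ) : triangleWave T (-y) = triangleWave T y := by
  simp [triangleWave]

theorem triangleWave_periodic (hT : T ≠ 0) : Function.Periodic (triangleWave T) (2 * T) := by
  intro y
  simp only [triangleWave]
  rw [show π / T * (y + 2 * T) = π / T * y + 2 * π by field_simp, cos_add_two_pi]

theorem triangleWave_intCast_mul_add (hT : T ≠ 0) (k : ℤ) (y : ℝ) :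
    triangleWave T (k * T + y) = triangleWave T (k * T - y) := by
  simp only [triangleWave]
  have h (x : ℝ) : π / T * (k * T + x) = k * π + π / T * x := by field_simp
  rw [sub_eq_add_neg, h, h, mul_neg, cos_add, cos_add, sin_int_mul_pi]
  simp

theorem triangleWave_of_mem_Icc (hT : 0 < T) {y : ℝ} (hy : y ∈ Icc 0 T) :
    triangleWave T y = y := by
  have h0 : 0 ≤ π / T * y := by have := hy.1; positivity
  have hπ : π / T * y ≤ π := by
    rw [div_mul_eq_mul_div, div_le_iff₀ hT]; nlinarith [pi_pos, hy.2]
  rw [triangleWave, arccos_cos h0 hπ]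
  field_simp

theorem triangleWave_mem_Icc (hT : 0 < T) (y : ℝ) : triangleWave T y ∈ Icc 0 T := by
  have h := arccos_le_pi (cos (π / T * y))
  refine ⟨by unfold triangleWave; have := arccos_nonneg (cos (π / T * y)); positivity, ?_⟩
  calc triangleWave T y ≤ T / π * π := by unfold triangleWave; gcongr
    _ = T := by field_simp

end TriangleWave

section Solution

variable {p z : ℝ → ℝ} {y : ℝ}

def SolvesAt (p z : ℝ → ℝ) (y : ℝ) : Prop :=
  HasDerivAt z (deriv z y) y ∧ HasDerivAt (deriv z) (deriv p (z y) / 8) y ∧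
    4 * deriv z y ^ 2 = p (z y)

theorem SolvesAt.comp_neg (h : SolvesAt p z (-y)) : SolvesAt p (fun x => z (-x)) y := by
  have hderiv : deriv (fun x => z (-x)) = fun x => -deriv z (-x) :=
    funext fun x => deriv_comp_neg z x
  obtain ⟨h1, h2, h3⟩ := h
  refine ⟨?_, ?_, ?_⟩ <;> simp only [hderiv]
  · exact (h1.comp y (hasDerivAt_neg y)).congr_deriv (mul_neg_one _)
  · exact (h2.comp y (hasDerivAt_neg y)).neg.congr_deriv (by ring)
  · rwa [neg_sq]

theorem SolvesAt.comp_add_const (c : ℝ) (h : SolvesAt p z (y + c)) :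
    SolvesAt p (fun x => z (x + c)) y := by
  have hderiv : deriv (fun x => z (x + c)) = fun x => deriv z (x + c) :=
    funext fun x => deriv_comp_add_const z c x
  obtain ⟨h1, h2, h3⟩ := h
  refine ⟨?_, ?_, ?_⟩ <;> simp only [hderiv]
  exacts [h1.comp_add_const y c, h2.comp_add_const y c, h3]

theorem SolvesAt.congr_of_eventuallyEq {w : ℝ → ℝ} (h : SolvesAt p w y)
    (hzw : z =ᶠ[𝓝 y] w) : SolvesAt p z y := by
  have hd : deriv z =ᶠ[𝓝 y] deriv w := hzw.deriv
  obtain ⟨h1, h2, h3⟩ := h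
  refine ⟨?_, ?_, ?_⟩
  · rw [hd.eq_of_nhds]; exact h1.congr_of_eventuallyEq hzw
  · rw [hzw.eq_of_nhds]; exact h2.congr_of_eventuallyEq hd
  · rwa [hd.eq_of_nhds, hzw.eq_of_nhds]

theorem SolvesAt.neg_of_even (heven : ∀ x, z (-x) = z x) (h : SolvesAt p z y) :
    SolvesAt p z (-y) := by
  have h' : SolvesAt p (fun x => z (-x)) (-y) := SolvesAt.comp_neg (by rwa [neg_neg])
  rwa [funext heven] at h'

theorem SolvesAt.add_period {c : ℝ} (hper : Function.Periodic z c) (h : SolvesAt p z y) :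
    SolvesAt p z (y + c) := by
  have h' : SolvesAt p (fun x => z (x + -c)) (y + c) := SolvesAt.comp_add_const (-c) (by simpa)
  rwa [funext hper.neg] at h'

theorem solvesAt_of_hasDerivAt_sqrt {U : Set ℝ} (hU : IsOpen U) (hp : Differentiable ℝ p)
    (hpos : ∀ x ∈ U, 0 < p (z x)) (hz : ∀ x ∈ U, HasDerivAt z (√(p (z x)) / 2) x)
    (hy : y ∈ U) : SolvesAt p z y := by
  have hderiv : deriv z =ᶠ[𝓝 y] fun x => √(p (z x)) / 2 :=
    eventually_of_mem (hU.mem_nhds hy) fun x hx => (hz x hx).deriv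
  have hpz : HasDerivAt (fun x => p (z x)) (deriv p (z y) * (√(p (z y)) / 2)) y :=
    (hp (z y)).hasDerivAt.comp y (hz y hy)
  have hne : √(p (z y)) ≠ 0 := (sqrt_pos.2 (hpos y hy)).ne'
  refine ⟨(hz y hy).deriv.symm ▸ hz y hy,
    (((hpz.sqrt (hpos y hy).ne').div_const 2).congr_of_eventuallyEq hderiv).congr_deriv ?_, ?_⟩
  · field_simp; norm_num
  · rw [(hz y hy).deriv, div_pow, sq_sqrt (hpos y hy).le]; ring

theorem solvesAt_of_eventually_ne {a : ℝ} (hp : ContDiff ℝ 1 p) (hz : ContinuousAt z a)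
    (hza : p (z a) = 0) (h : ∀ᶠ y in 𝓝[≠] a, SolvesAt p z y) : SolvesAt p z a := by
  have hlim : Tendsto (deriv z) (𝓝[≠] a) (𝓝 0) := by
    have hsqrt : Tendsto (fun y => √(p (z y)) / 2) (𝓝[≠] a) (𝓝 0) := by
      have := ((continuous_sqrt.comp hp.continuous).continuousAt.comp hz).div_const 2
      simpa [hza] using this.tendsto.mono_left nhdsWithin_le_nhds
    refine squeeze_zero_norm' ?_ hsqrt
    filter_upwards [h] with y hy
    rw [← hy.2.2, show 4 * deriv z y ^ 2 = (2 * deriv z y) ^ 2 by ring, sqrt_sq_eq_abs,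
      abs_mul, norm_eq_abs]
    norm_num
  have h1 : HasDerivAt z 0 a := hasDerivAt_of_tendsto_nhdsNE (h.mono fun y hy => hy.1) hz hlim
  have hz' : ContinuousAt (deriv z) a := continuousAt_iff_punctured_nhds.2 (h1.deriv ▸ hlim)
  have h2 : HasDerivAt (deriv z) (deriv p (z a) / 8) a :=
    hasDerivAt_of_tendsto_nhdsNE (h.mono fun y hy => hy.2.1) hz'
      ((((hp.continuous_deriv le_rfl).continuousAt.comp hz).div_const 8).tendsto.mono_left
        nhdsWithin_le_nhds)
  exact ⟨h1.deriv.symm ▸ h1, h2, by rw [h1.deriv, hza]; ring⟩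

theorem forall_of_forall_Icc {c : ℝ} (hc : 0 < c) {P : ℝ → Prop}
    (hneg : ∀ y, P y → P (-y)) (hper : ∀ y (m : ℤ), P y → P (y + m * (2 * c)))
    (h : ∀ y ∈ Icc 0 c, P y) (y : ℝ) : P y := by
  have h2c : 0 < 2 * c := by linarith
  obtain ⟨h1, h2⟩ := toIcoMod_mem_Ico h2c (-c) y
  rw [← toIcoMod_add_toIcoDiv_zsmul h2c (-c) y, zsmul_eq_mul]
  apply hper
  rcases le_total 0 (toIcoMod h2c (-c) y) with h0 | h0
  · exact h _ ⟨h0, by linarith⟩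
  · simpa using hneg _ (h (-toIcoMod h2c (-c) y) ⟨by linarith, by linarith⟩)

theorem solvesAt_of_forall_Ioo {T : ℝ} (hT : 0 < T) (hp : ContDiff ℝ 1 p) (hz : Continuous z)
    (heven : ∀ x, z (-x) = z x) (hper : Function.Periodic z (2 * T)) (hp0 : p (z 0) = 0)
    (hpT : p (z T) = 0) (hIoo : ∀ x ∈ Ioo 0 T, SolvesAt p z x) (y : ℝ) : SolvesAt p z y := by
  have hneg (x : ℝ) (hx : SolvesAt p z x) : SolvesAt p z (-x) := hx.neg_of_even heven
  have hshift (x : ℝ) (m : ℤ) (hx : SolvesAt p z x) : SolvesAt p z (x + m * (2 * T)) :=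
    hx.add_period (hper.int_mul m)
  have hnear (a : ℝ) (hpa : p (z a) = 0)
      (ha : ∀ x ∈ Ioo (a - T) (a + T), x ≠ a → SolvesAt p z x) : SolvesAt p z a :=
    solvesAt_of_eventually_ne hp hz.continuousAt hpa <| eventually_nhdsWithin_iff.2 <|
      eventually_of_mem (Ioo_mem_nhds (by linarith) (by linarith)) ha
  have h0 : SolvesAt p z 0 := hnear 0 hp0 fun x hx hx0 => by
    rcases hx0.lt_or_gt with hx0 | hx0
    · simpa using hneg _ (hIoo (-x) ⟨by linarith, by linarith [hx.1]⟩)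
    · exact hIoo x ⟨hx0, by linarith [hx.2]⟩
  have hT' : SolvesAt p z T := hnear T hpT fun x hx hxT => by
    rcases hxT.lt_or_gt with hxT | hxT
    · exact hIoo x ⟨by linarith [hx.1], hxT⟩
    · simpa using hshift _ 1 (hneg _ (hIoo (2 * T - x) ⟨by linarith [hx.2], by linarith⟩))
  refine forall_of_forall_Icc hT hneg hshift (fun x hx => ?_) y
  rcases hx.1.eq_or_lt with rfl | hx0
  · exact h0
  rcases hx.2.eq_or_lt with rfl | hxT
  · exact hT'
  exact hIoo x ⟨hx0, hxT⟩

end Solution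

theorem solvesAt_travelTimeInv {p : ℝ → ℝ} {a b y : ℝ} (hp : ContDiff ℝ 1 p)
    (hpos : ∀ s ∈ Ioo a b, 0 < p s) (hint : IntegrableOn (fun s => 2 / √(p s)) (Ioo a b))
    (hy : y ∈ Ioo 0 (travelTime a b (fun s => 2 / √(p s)) b)) :
    SolvesAt p (travelTimeInv a b fun s => 2 / √(p s)) y := by
  have hfpos : ∀ s ∈ Ioo a b, 0 < 2 / √(p s) := fun s hs =>
    div_pos two_pos (sqrt_pos.2 (hpos s hs))
  have hfcont : ContinuousOn (fun s => 2 / √(p s)) (Ioo a b) :=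
    continuousOn_const.div (continuous_sqrt.comp hp.continuous).continuousOn
      fun s hs => (sqrt_pos.2 (hpos s hs)).ne'
  refine solvesAt_of_hasDerivAt_sqrt isOpen_Ioo (hp.differentiable one_ne_zero)
    (fun x hx => hpos _ (travelTimeInv_mem_Ioo hint hfpos hx)) (fun x hx => ?_) hy
  exact (hasDerivAt_travelTimeInv hint hfpos hfcont hx).congr_deriv (inv_div _ _)

theorem exists_even_periodic_solution {p : ℝ → ℝ} {a b ϑ : ℝ} (hab : a < b)
    (hp : ContDiff ℝ 1 p) (hpa : p a = 0) (hpb : p b = 0) (hpos : ∀ s ∈ Ioo a b, 0 < p s)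
    (hint : IntegrableOn (fun s => 2 / √(p s)) (Ioo a b))
    (hϑ : ϑ = ∫ s in a..b, 2 / √(p s)) :
    ∃ z : ℝ → ℝ, (∀ y, SolvesAt p z y) ∧ z 0 = a ∧ (∀ y, z y ∈ Icc a b) ∧
      (∀ y, z (-y) = z y) ∧ 0 < ϑ ∧ StrictMonoOn z (Icc 0 ϑ) ∧ z ϑ = b ∧
      (∀ (k : ℤ) (y : ℝ), z (k * ϑ + y) = z (k * ϑ - y)) ∧ Function.Periodic z (2 * ϑ) := by
  set f := fun s => 2 / √(p s)
  have hfpos : ∀ s ∈ Ioo a b, 0 < f s := fun s hs => div_pos two_pos (sqrt_pos.2 (hpos s hs))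
  rw [← travelTime_integral hab.le] at hϑ
  subst hϑ
  set T := travelTime a b f b
  set Z := travelTimeInv a b f
  have hT : 0 < T := by simpa [travelTime_self] using strictMono_travelTime hint hfpos hab
  have hZ0 : Z 0 = a := travelTimeInv_zero hint hfpos
  have hZT : Z T = b := travelTimeInv_travelTime hint hfpos b
  have hZmono : StrictMono Z := strictMono_travelTimeInv hint hfpos
  set z := fun y => Z (triangleWave T y)
  have hzZ : ∀ y ∈ Icc 0 T, z y = Z y := fun y hy => congrArg Z (triangleWave_of_mem_Icc hT hy)
  have hz0 : z 0 = a := (hzZ 0 ⟨le_rfl, hT.le⟩).trans hZ0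
  have hzT : z T = b := (hzZ T ⟨hT.le, le_rfl⟩).trans hZT
  have hzeven : ∀ y, z (-y) = z y := fun y => congrArg Z (triangleWave_neg y)
  have hzper : Function.Periodic z (2 * T) := fun y => congrArg Z (triangleWave_periodic hT.ne' y)
  have hsol : ∀ y ∈ Ioo 0 T, SolvesAt p z y := fun y hy =>
    (solvesAt_travelTimeInv hp hpos hint hy).congr_of_eventuallyEq <|
      eventually_of_mem (isOpen_Ioo.mem_nhds hy) fun x hx => hzZ x (Ioo_subset_Icc_self hx)
  refine ⟨z, solvesAt_of_forall_Ioo hT hp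
      ((continuous_travelTimeInv hint hfpos).comp (continuous_triangleWave T)) hzeven hzper
      (by rw [hz0, hpa]) (by rw [hzT, hpb]) hsol, hz0, fun y => ?_, hzeven, hT,
    fun x hx y hy hxy => ?_, hzT, fun k y => congrArg Z (triangleWave_intCast_mul_add hT.ne' k y),
    hzper⟩
  · rw [← hZ0, ← hZT]
    exact ⟨hZmono.monotone (triangleWave_mem_Icc hT y).1,
      hZmono.monotone (triangleWave_mem_Icc hT y).2⟩
  · rw [hzZ x hx, hzZ y hy]
    exact hZmono hxy

section SerrinCubic

variable {η τ : ℝ}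

def serrinCubic (η τ s : ℝ) : ℝ :=
  -(η * τ ^ 2 / 2) * (s - 2 / (η * τ ^ 2)) * (s - 2 / η) * (s + 2 * η)

theorem two_div_lt_two_div_mul_sq (hη : 0 < η) (hτ0 : 0 < τ) (hτ1 : τ < 1) :
    2 / η < 2 / (η * τ ^ 2) := by
  apply div_lt_div_of_pos_left two_pos (by positivity)
  nlinarith [mul_lt_mul_of_pos_left (show τ ^ 2 < 1 by nlinarith) hη]

theorem serrinCubic_eq (s : ℝ) : serrinCubic η τ s =
    η * τ ^ 2 / 2 * ((2 / (η * τ ^ 2) - s) * (s - 2 / η) * (s + 2 * η)) := by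
  unfold serrinCubic; ring

theorem serrinCubic_pos (hη : 0 < η) (hτ : 0 < τ) {s : ℝ}
    (hs : s ∈ Ioo (2 / η) (2 / (η * τ ^ 2))) :
    0 < serrinCubic η τ s := by
  obtain ⟨h1, h2⟩ := hs
  have : 0 < 2 / η := by positivity
  rw [serrinCubic_eq]
  exact mul_pos (by positivity) (mul_pos (mul_pos (by linarith) (by linarith)) (by linarith))

theorem mul_sq_le_serrinCubic (hη : 0 < η) (hτ : 0 < τ) {s : ℝ}
    (hs : s ∈ Ioo (2 / η) (2 / (η * τ ^ 2))) :
    η ^ 2 * τ ^ 2 * ((s - 2 / η) * (2 / (η * τ ^ 2) - s)) ≤ serrinCubic η τ s := by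
  obtain ⟨h1, h2⟩ := hs
  have : 0 < 2 / η := by positivity
  have hdiff : serrinCubic η τ s - η ^ 2 * τ ^ 2 * ((s - 2 / η) * (2 / (η * τ ^ 2) - s)) =
      η * τ ^ 2 / 2 * ((2 / (η * τ ^ 2) - s) * (s - 2 / η) * s) := by
    rw [serrinCubic_eq]; ring
  have : 0 ≤ η * τ ^ 2 / 2 * ((2 / (η * τ ^ 2) - s) * (s - 2 / η) * s) :=
    mul_nonneg (by positivity) (mul_nonneg (mul_nonneg (by linarith) (by linarith)) (by linarith))
  linarith

end SerrinCubic

end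

/-- Properties of the solution `z(y)` of `8z'' = p'(z)`, `z(0) = 2/η`, `z'(0) = 0`, where
`p(s) = −(ητ²/2)(s − 2/(ητ²))(s − 2/η)(s + 2η)`: it is globally defined, satisfies
`4z'² = p(z)`, oscillates in `[2/η, 2/(ητ²)]`, is even, strictly increasing on `[0,ϑ]`
with `ϑ = ∫ 2/√p`, symmetric about every `kϑ`, and `2ϑ`-periodic. -/
theorem conformal_factor_ode_properties
    (η τ : ℝ) (hη : 0 < η) (hτ0 : 0 < τ) (hτ1 : τ < 1)
    (p : ℝ → ℝ)
    (hp : p = fun s => -(η * τ ^ 2 / 2) * (s - 2 / (η * τ ^ 2)) * (s - 2 / η) * (s + 2 * η))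
    (ϑ : ℝ)
    (hϑ : ϑ = ∫ s in (2 / η)..(2 / (η * τ ^ 2)), 2 / Real.sqrt (p s)) :
    ∃ z z' : ℝ → ℝ,
      (∀ y, HasDerivAt z (z' y) y) ∧
      (∀ y, HasDerivAt z' (deriv p (z y) / 8) y) ∧
      z 0 = 2 / η ∧ z' 0 = 0 ∧
      (∀ y, 4 * (z' y) ^ 2 = p (z y)) ∧
      (∀ y, 2 / η ≤ z y ∧ z y ≤ 2 / (η * τ ^ 2)) ∧
      (∀ y, z (-y) = z y) ∧
      IntervalIntegrable (fun s => 2 / Real.sqrt (p s)) volume (2 / η) (2 / (η * τ ^ 2)) ∧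
      0 < ϑ ∧
      StrictMonoOn z (Icc 0 ϑ) ∧
      z ϑ = 2 / (η * τ ^ 2) ∧
      (∀ (k : ℤ) (y : ℝ), z (k * ϑ + y) = z (k * ϑ - y)) ∧
      Function.Periodic z (2 * ϑ) := by
  change p = serrinCubic η τ at hp
  subst hp
  have hAC := two_div_lt_two_div_mul_sq hη hτ0 hτ1
  have hint :
      IntegrableOn (fun s => 2 / √(serrinCubic η τ s)) (Ioo (2 / η) (2 / (η * τ ^ 2))) := by
    refine IntegrableOn.congr_fun ?_ (fun s _ => (div_eq_mul_inv _ _).symm) measurableSet_Ioo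
    exact (integrableOn_inv_sqrt_of_le hAC (by positivity) (by unfold serrinCubic; fun_prop)
      fun s hs => mul_sq_le_serrinCubic hη hτ0 hs).const_mul 2
  obtain ⟨z, hsol, hz0, hbd, heven, hϑpos, hmono, hzϑ, hrefl, hper⟩ :=
    exists_even_periodic_solution hAC (by unfold serrinCubic; fun_prop)
      (by simp [serrinCubic]) (by simp [serrinCubic]) (fun s hs => serrinCubic_pos hη hτ0 hs)
      hint hϑ
  have hz'0 : deriv z 0 = 0 := by
    simpa [hz0, serrinCubic] using (hsol 0).2.2
  exact ⟨z, deriv z, fun y => (hsol y).1, fun y => (hsol y).2.1, hz0, hz'0, fun y => (hsol y).2.2,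
    hbd, heven, (intervalIntegrable_iff_integrableOn_Ioo_of_le hAC.le).2 hint, hϑpos, hmono, hzϑ,
    hrefl, hper⟩
end

section
/- The function Θ is strictly increasing in each variable: for all real numbers 0 < η₁ < η₂ and all τ ∈ (0,1], Θ(η₁,τ) < Θ(η₂,τ); and for all η > 0 and all 0 < τ₁ < τ₂ ≤ 1, Θ(η,τ₁) < Θ(η,τ₂). Consequently, for each value q ∈ (0,π), the level set {(η,τ) : η > 0, τ ∈ (0,1], Θ(η,τ) = q} is the graph of a strictly decreasing function of τ: if Θ(η₁,τ₁) = Θ(η₂,τ₂) = q with τ₁ < τ₂ then η₁ > η₂. -/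
open Set

/-- The arc-length integral `Θ(η,τ)` of one fundamental arc (equation (4.16)). -/
noncomputable def SerrinTheta (η τ : ℝ) : ℝ :=
  ∫ t in (0 : ℝ)..1, (η * Real.sqrt (1 + (τ ^ 2 - 1) * t)
    / Real.sqrt (1 + η ^ 2 * (1 + (τ ^ 2 - 1) * t))) / Real.sqrt (t * (1 - t))

namespace SerrinAux

open MeasureTheory intervalIntegral

/-- The integrand. -/
noncomputable def F (η τ t : ℝ) : ℝ :=
  (η * Real.sqrt (1 + (τ ^ 2 - 1) * t)
    / Real.sqrt (1 + η ^ 2 * (1 + (τ ^ 2 - 1) * t))) / Real.sqrt (t * (1 - t))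

lemma serrinTheta_eq (η τ : ℝ) : SerrinTheta η τ = ∫ t in (0:ℝ)..1, F η τ t := rfl

/-- The basic increasing function `a ↦ a / √(1+a²)`. -/
noncomputable def phi (a : ℝ) : ℝ := a / Real.sqrt (1 + a ^ 2)

lemma phi_lt_phi {a b : ℝ} (ha : 0 ≤ a) (hab : a < b) : phi a < phi b := by
  have h1 : (0:ℝ) < Real.sqrt (1 + a ^ 2) := Real.sqrt_pos.mpr (by positivity)
  have h2 : (0:ℝ) < Real.sqrt (1 + b ^ 2) := Real.sqrt_pos.mpr (by positivity)
  rw [phi, phi, div_lt_div_iff₀ h1 h2]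
  have key : (a * Real.sqrt (1 + b ^ 2)) ^ 2 < (b * Real.sqrt (1 + a ^ 2)) ^ 2 := by
    rw [mul_pow, mul_pow, Real.sq_sqrt (by positivity), Real.sq_sqrt (by positivity)]
    nlinarith
  have hb : 0 ≤ b := ha.trans hab.le
  exact lt_of_pow_lt_pow_left₀ 2 (mul_nonneg hb (Real.sqrt_nonneg _)) key

lemma phi_mono {a b : ℝ} (ha : 0 ≤ a) (hab : a ≤ b) : phi a ≤ phi b := by
  rcases hab.lt_or_eq with h | h
  · exact (phi_lt_phi ha h).le
  · rw [h]

lemma phi_le_one {a : ℝ} (ha : 0 ≤ a) : phi a ≤ 1 := by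
  rw [phi, div_le_one (Real.sqrt_pos.mpr (by positivity))]
  calc a = Real.sqrt (a ^ 2) := (Real.sqrt_sq ha).symm
    _ ≤ Real.sqrt (1 + a ^ 2) := Real.sqrt_le_sqrt (by linarith)

lemma eq_phi {η s : ℝ} (hs : 0 ≤ s) :
    η * Real.sqrt s / Real.sqrt (1 + η ^ 2 * s) = phi (η * Real.sqrt s) := by
  rw [phi, mul_pow, Real.sq_sqrt hs]

lemma F_eq_phi {η τ t : ℝ} (hs : 0 ≤ 1 + (τ ^ 2 - 1) * t) :
    F η τ t = phi (η * Real.sqrt (1 + (τ ^ 2 - 1) * t)) / Real.sqrt (t * (1 - t)) := by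
  rw [F, eq_phi hs]

lemma s_pos {τ t : ℝ} (hτ : 0 < τ) (hτ1 : τ ≤ 1) (ht0 : 0 ≤ t) (ht1 : t ≤ 1) :
    0 < 1 + (τ ^ 2 - 1) * t := by
  have h1 : (0:ℝ) ≤ (1 - τ ^ 2) * (1 - t) :=
    mul_nonneg (by nlinarith) (by linarith)
  nlinarith

lemma F_nonneg {η τ : ℝ} (hη : 0 ≤ η) (t : ℝ) : 0 ≤ F η τ t := by
  rw [F]
  have h1 : 0 ≤ η * Real.sqrt (1 + (τ ^ 2 - 1) * t) := mul_nonneg hη (Real.sqrt_nonneg _)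
  positivity

lemma F_measurable (η τ : ℝ) : Measurable (F η τ) := by
  unfold F
  fun_prop

lemma G_integrable :
    IntervalIntegrable (fun t => (Real.sqrt (t * (1 - t)))⁻¹) volume 0 1 := by
  have hmeas : Measurable fun t : ℝ => (Real.sqrt (t * (1 - t)))⁻¹ := by fun_prop
  have h1 : IntervalIntegrable (fun t => (Real.sqrt (t * (1 - t)))⁻¹) volume 0 (1/2) := by
    apply IntervalIntegrable.mono_fun'
      (g := fun t : ℝ => Real.sqrt 2 * t ^ (-(1/2) : ℝ))
    · exact (intervalIntegrable_rpow' (by norm_num)).const_mul _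
    · exact hmeas.aestronglyMeasurable.restrict
    · rw [Set.uIoc_of_le (by norm_num : (0:ℝ) ≤ 1/2)]
      filter_upwards [ae_restrict_mem measurableSet_Ioc] with t ht
      obtain ⟨ht0, ht2⟩ := ht
      have hst : (0:ℝ) < Real.sqrt t := Real.sqrt_pos.mpr ht0
      have h12 : Real.sqrt (1/2) ≤ Real.sqrt (1 - t) := Real.sqrt_le_sqrt (by linarith)
      have h12pos : (0:ℝ) < Real.sqrt (1/2) := Real.sqrt_pos.mpr (by norm_num)
      have hpos : (0:ℝ) < Real.sqrt (t * (1 - t)) := by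
        rw [Real.sqrt_mul ht0.le]
        exact mul_pos hst (lt_of_lt_of_le h12pos h12)
      rw [Real.norm_eq_abs, abs_of_nonneg (inv_nonneg.mpr hpos.le)]
      have hrp : t ^ (-(1/2) : ℝ) = (Real.sqrt t)⁻¹ := by
        rw [Real.rpow_neg ht0.le, Real.sqrt_eq_rpow]
      have hinv : (Real.sqrt 2)⁻¹ = Real.sqrt (1/2) := by
        rw [show (1/2 : ℝ) = 2⁻¹ by norm_num, Real.sqrt_inv]
      rw [hrp]
      rw [inv_le_comm₀ hpos (by positivity)]
      rw [Real.sqrt_mul ht0.le]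
      have : Real.sqrt t * (Real.sqrt 2)⁻¹ ≤ Real.sqrt t * Real.sqrt (1 - t) := by
        apply mul_le_mul_of_nonneg_left _ hst.le
        rw [hinv]; exact h12
      have heq : (Real.sqrt 2 * (Real.sqrt t)⁻¹)⁻¹ = Real.sqrt t * (Real.sqrt 2)⁻¹ := by
        rw [mul_inv, inv_inv, mul_comm]
      rw [heq] at *
      linarith
  have h2 : IntervalIntegrable (fun t => (Real.sqrt (t * (1 - t)))⁻¹) volume (1/2) 1 := by
    have h := (h1.comp_sub_left 1).symm
    norm_num at h
    have heq : (fun x : ℝ => (Real.sqrt ((1 - x) * x))⁻¹)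
        = fun t : ℝ => (Real.sqrt (t * (1 - t)))⁻¹ := by
      funext t; rw [mul_comm]
    rwa [heq] at h
  exact h1.trans h2

lemma F_integrable {η τ : ℝ} (hη : 0 ≤ η) (hτ : 0 < τ) (hτ1 : τ ≤ 1) :
    IntervalIntegrable (F η τ) volume 0 1 := by
  apply G_integrable.mono_fun' ((F_measurable η τ).aestronglyMeasurable.restrict)
  rw [Set.uIoc_of_le (by norm_num : (0:ℝ) ≤ 1)]
  filter_upwards [ae_restrict_mem measurableSet_Ioc] with t ht
  obtain ⟨ht0, ht1⟩ := ht
  have hs := s_pos hτ hτ1 ht0.le ht1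
  rw [Real.norm_eq_abs, abs_of_nonneg (F_nonneg hη t), F_eq_phi hs.le]
  have hphi1 : phi (η * Real.sqrt (1 + (τ ^ 2 - 1) * t)) ≤ 1 :=
    phi_le_one (mul_nonneg hη (Real.sqrt_nonneg _))
  have hden : (0:ℝ) ≤ Real.sqrt (t * (1 - t)) := Real.sqrt_nonneg _
  rw [← one_div]
  exact div_le_div_of_nonneg_right hphi1 hden

lemma F_le_F {η₁ τ₁ η₂ τ₂ : ℝ} (hη₁ : 0 ≤ η₁) (hη : η₁ ≤ η₂) (hτ₁ : 0 < τ₁)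
    (hτ : τ₁ ≤ τ₂) (hτ1 : τ₂ ≤ 1) {t : ℝ} (ht : t ∈ Set.Icc (0:ℝ) 1) :
    F η₁ τ₁ t ≤ F η₂ τ₂ t := by
  obtain ⟨ht0, ht1⟩ := ht
  have hs₁ := s_pos hτ₁ (hτ.trans hτ1) ht0 ht1
  have hs₂ := s_pos (hτ₁.trans_le hτ) hτ1 ht0 ht1
  have hsq : τ₁ ^ 2 ≤ τ₂ ^ 2 := by nlinarith
  have hss : 1 + (τ₁ ^ 2 - 1) * t ≤ 1 + (τ₂ ^ 2 - 1) * t := by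
    nlinarith [mul_nonneg (sub_nonneg.mpr hsq) ht0]
  rw [F_eq_phi hs₁.le, F_eq_phi hs₂.le]
  have ha : η₁ * Real.sqrt (1 + (τ₁ ^ 2 - 1) * t) ≤ η₂ * Real.sqrt (1 + (τ₂ ^ 2 - 1) * t) :=
    mul_le_mul hη (Real.sqrt_le_sqrt hss) (Real.sqrt_nonneg _) (hη₁.trans hη)
  have hphi := phi_mono (mul_nonneg hη₁ (Real.sqrt_nonneg _)) ha
  have hden : (0:ℝ) ≤ Real.sqrt (t * (1 - t)) := Real.sqrt_nonneg _
  exact div_le_div_of_nonneg_right hphi hden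

lemma F_lt_F {η₁ τ₁ η₂ τ₂ : ℝ} (hη₁ : 0 < η₁) (hη : η₁ ≤ η₂) (hτ₁ : 0 < τ₁)
    (hτ : τ₁ ≤ τ₂) (hτ1 : τ₂ ≤ 1) (hne : η₁ < η₂ ∨ τ₁ < τ₂)
    {t : ℝ} (ht : t ∈ Set.Ioo (0:ℝ) 1) : F η₁ τ₁ t < F η₂ τ₂ t := by
  obtain ⟨ht0, ht1⟩ := ht
  have hs₁ := s_pos hτ₁ (hτ.trans hτ1) ht0.le ht1.le
  have hs₂ := s_pos (hτ₁.trans_le hτ) hτ1 ht0.le ht1.le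
  have hst₁ : (0:ℝ) < Real.sqrt (1 + (τ₁ ^ 2 - 1) * t) := Real.sqrt_pos.mpr hs₁
  have hden : (0:ℝ) < Real.sqrt (t * (1 - t)) := Real.sqrt_pos.mpr (by nlinarith)
  rw [F_eq_phi hs₁.le, F_eq_phi hs₂.le]
  have ha : η₁ * Real.sqrt (1 + (τ₁ ^ 2 - 1) * t) < η₂ * Real.sqrt (1 + (τ₂ ^ 2 - 1) * t) := by
    rcases hne with h | h
    · calc η₁ * Real.sqrt (1 + (τ₁ ^ 2 - 1) * t)
          < η₂ * Real.sqrt (1 + (τ₁ ^ 2 - 1) * t) := by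
            exact mul_lt_mul_of_pos_right h hst₁
        _ ≤ η₂ * Real.sqrt (1 + (τ₂ ^ 2 - 1) * t) := by
            have hsq : τ₁ ^ 2 ≤ τ₂ ^ 2 := by nlinarith
            apply mul_le_mul_of_nonneg_left (Real.sqrt_le_sqrt
              (by nlinarith [mul_nonneg (sub_nonneg.mpr hsq) ht0.le]))
              (hη₁.trans_le hη).le
    · have hsq : τ₁ ^ 2 < τ₂ ^ 2 := by nlinarith
      have hss : 1 + (τ₁ ^ 2 - 1) * t < 1 + (τ₂ ^ 2 - 1) * t := by
        nlinarith [mul_pos (sub_pos.mpr hsq) ht0]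
      calc η₁ * Real.sqrt (1 + (τ₁ ^ 2 - 1) * t)
          < η₁ * Real.sqrt (1 + (τ₂ ^ 2 - 1) * t) := by
            exact mul_lt_mul_of_pos_left (Real.sqrt_lt_sqrt hs₁.le hss) hη₁
        _ ≤ η₂ * Real.sqrt (1 + (τ₂ ^ 2 - 1) * t) := by
            exact mul_le_mul_of_nonneg_right hη (Real.sqrt_nonneg _)
  have hphi := phi_lt_phi (mul_nonneg hη₁.le (Real.sqrt_nonneg _)) ha
  exact div_lt_div_of_pos_right hphi hden

lemma integral_lt_of {f g : ℝ → ℝ}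
    (hf : IntervalIntegrable f volume 0 1) (hg : IntervalIntegrable g volume 0 1)
    (hle : ∀ t ∈ Set.Icc (0:ℝ) 1, f t ≤ g t)
    (hlt : ∀ t ∈ Set.Ioo (0:ℝ) 1, f t < g t) :
    (∫ t in (0:ℝ)..1, f t) < ∫ t in (0:ℝ)..1, g t := by
  have hsub : IntervalIntegrable (fun t => g t - f t) volume 0 1 := hg.sub hf
  have hss : ∀ c d : ℝ, 0 ≤ c → c ≤ d → d ≤ 1 →
      IntervalIntegrable (fun t => g t - f t) volume c d := by
    intro c d hc hcd hd1
    apply hsub.mono_set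
    rw [Set.uIcc_of_le hcd, Set.uIcc_of_le (by norm_num : (0:ℝ) ≤ 1)]
    exact Set.Icc_subset_Icc hc hd1
  have i1 := hss 0 (1/4) (by norm_num) (by norm_num) (by norm_num)
  have i2 := hss (1/4) (3/4) (by norm_num) (by norm_num) (by norm_num)
  have i3 := hss (3/4) 1 (by norm_num) (by norm_num) (by norm_num)
  have i23 := hss (1/4) 1 (by norm_num) (by norm_num) (by norm_num)
  have e2 := intervalIntegral.integral_add_adjacent_intervals i2 i3
  have e1 := intervalIntegral.integral_add_adjacent_intervals i1 i23
  have n1 : 0 ≤ ∫ t in (0:ℝ)..(1/4:ℝ), (g t - f t) :=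
    intervalIntegral.integral_nonneg (by norm_num)
      (fun u hu => sub_nonneg.mpr (hle u ⟨hu.1, by linarith [hu.2]⟩))
  have n3 : 0 ≤ ∫ t in (3/4:ℝ)..(1:ℝ), (g t - f t) :=
    intervalIntegral.integral_nonneg (by norm_num)
      (fun u hu => sub_nonneg.mpr (hle u ⟨by linarith [hu.1], hu.2⟩))
  have p2 : 0 < ∫ t in (1/4:ℝ)..(3/4:ℝ), (g t - f t) :=
    intervalIntegral.intervalIntegral_pos_of_pos_on i2
      (fun x hx => sub_pos.mpr (hlt x ⟨by linarith [hx.1], by linarith [hx.2]⟩))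
      (by norm_num)
  have key : 0 < ∫ t in (0:ℝ)..1, (g t - f t) := by
    rw [← e1, ← e2]; linarith
  have hdiff := intervalIntegral.integral_sub hg hf
  linarith [key, hdiff]

lemma theta_lt {η₁ τ₁ η₂ τ₂ : ℝ} (hη₁ : 0 < η₁) (hη : η₁ ≤ η₂) (hτ₁ : 0 < τ₁)
    (hτ : τ₁ ≤ τ₂) (hτ1 : τ₂ ≤ 1) (hne : η₁ < η₂ ∨ τ₁ < τ₂) :
    SerrinTheta η₁ τ₁ < SerrinTheta η₂ τ₂ := by
  rw [serrinTheta_eq, serrinTheta_eq]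
  exact integral_lt_of (F_integrable hη₁.le hτ₁ (hτ.trans hτ1))
    (F_integrable (hη₁.le.trans hη) (hτ₁.trans_le hτ) hτ1)
    (fun t ht => F_le_F hη₁.le hη hτ₁ hτ hτ1 ht)
    (fun t ht => F_lt_F hη₁ hη hτ₁ hτ hτ1 hne ht)

end SerrinAux

/-- `Θ` is strictly increasing in each of `η` and `τ`; consequently each level set
`{Θ = q}` with `q ∈ (0,π)` is the graph of a strictly decreasing function of `τ`. -/
theorem theta_strictly_monotone :
    (∀ η₁ η₂ τ : ℝ, 0 < η₁ → η₁ < η₂ → 0 < τ → τ ≤ 1 →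
      SerrinTheta η₁ τ < SerrinTheta η₂ τ) ∧
    (∀ η τ₁ τ₂ : ℝ, 0 < η → 0 < τ₁ → τ₁ < τ₂ → τ₂ ≤ 1 →
      SerrinTheta η τ₁ < SerrinTheta η τ₂) ∧
    (∀ q η₁ τ₁ η₂ τ₂ : ℝ, 0 < q → q < Real.pi →
      0 < η₁ → 0 < τ₁ → τ₁ ≤ 1 → 0 < η₂ → 0 < τ₂ → τ₂ ≤ 1 →
      SerrinTheta η₁ τ₁ = q → SerrinTheta η₂ τ₂ = q → τ₁ < τ₂ → η₂ < η₁) := by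
  refine ⟨fun η₁ η₂ τ hη₁ hη hτ hτ1 =>
      SerrinAux.theta_lt hη₁ hη.le hτ le_rfl hτ1 (Or.inl hη),
    fun η τ₁ τ₂ hη hτ₁ hτ hτ1 =>
      SerrinAux.theta_lt hη le_rfl hτ₁ hτ.le hτ1 (Or.inr hτ),
    fun q η₁ τ₁ η₂ τ₂ _ _ hη₁ hτ₁ _ hη₂ _ hτ₂1 h1 h2 hτ => ?_⟩
  by_contra hcon
  push_neg at hcon
  have : SerrinTheta η₁ τ₁ < SerrinTheta η₂ τ₂ :=
    SerrinAux.theta_lt hη₁ hcon hτ₁ hτ.le hτ₂1 (Or.inr hτ)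
  rw [h1, h2] at this
  exact lt_irrefl q this
end

section
/- For every η > 0, the integral identity ∫₀¹ η / ( √t · √(1 + η²(1 − t)) ) dt = 2·arctan η holds, and consequently Θ(η,τ) → 2·arctan η as τ → 0⁺. -/
open Set

/-!
The integral `∫₀¹ η / (√t · √(1 + η²(1 − t))) dt` has the explicit primitive
`2 arctan (η √t / √(1 + η²(1 − t)))`, which vanishes at `0` and equals `2 arctan η` at `1`.
With `X = 1 + (τ² − 1) t ∈ [0, 1]` the integrand of `Θ(η, τ)` is `η √X / √(1 + η² X)`, a quantity
of absolute value at most `1`, divided by `√(t (1 − t))`; hence it is dominated, uniformly in `τ`,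
by the integrable function `1/√t + 1/√(1 − t)`. Dominated convergence makes `Θ(η, ·)` continuous,
and at `τ = 0` the factor `√(1 − t)` cancels, leaving exactly the integral above.
-/

open Real Filter Topology MeasureTheory intervalIntegral

lemma hasDerivAt_two_mul_arctan_mul_sqrt_div_sqrt (η : ℝ) {t : ℝ} (h₀ : 0 < t) (h₁ : t ≤ 1) :
    HasDerivAt (fun t => 2 * arctan (η * √t / √(1 + η ^ 2 * (1 - t))))
      (η / (√t * √(1 + η ^ 2 * (1 - t)))) t := by
  have hu : 0 < 1 + η ^ 2 * (1 - t) := by have := sub_nonneg.mpr h₁; positivity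
  have hB := sqrt_pos.mpr hu
  have hu' : HasDerivAt (fun y => 1 + η ^ 2 * (1 - y)) (-η ^ 2) t := by
    simpa using (((hasDerivAt_id t).const_sub 1).const_mul (η ^ 2)).const_add 1
  have hq := ((hasDerivAt_sqrt h₀.ne').const_mul η).fun_div (hu'.sqrt hu.ne') hB.ne'
  refine (hq.arctan.const_mul 2).congr_deriv ?_
  field_simp
  ring

theorem integral_div_sqrt_mul_sqrt_eq_two_mul_arctan {η : ℝ} (hη : 0 < η) :
    ∫ t in (0 : ℝ)..1, η / (√t * √(1 + η ^ 2 * (1 - t))) = 2 * arctan η := by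
  have hcont : ContinuousOn (fun t => 2 * arctan (η * √t / √(1 + η ^ 2 * (1 - t))))
      (Icc 0 1) := by
    refine continuousOn_const.mul (continuous_arctan.comp_continuousOn
      (.div (by fun_prop) (by fun_prop) fun t ht => ?_))
    have := sub_nonneg.mpr ht.2
    positivity
  have hderiv : ∀ t ∈ Ioo (0 : ℝ) 1, HasDerivAt
      (fun t => 2 * arctan (η * √t / √(1 + η ^ 2 * (1 - t))))
      (η / (√t * √(1 + η ^ 2 * (1 - t)))) t :=
    fun t ht => hasDerivAt_two_mul_arctan_mul_sqrt_div_sqrt η ht.1 ht.2.le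
  have hint : IntervalIntegrable (fun t => η / (√t * √(1 + η ^ 2 * (1 - t)))) volume 0 1 :=
    intervalIntegrable_deriv_of_nonneg (by simpa using hcont) (by simpa using hderiv)
      fun t _ => by positivity
  rw [integral_eq_sub_of_hasDerivAt_of_le zero_le_one hcont hderiv hint]
  simp

lemma one_le_sqrt_add_sqrt_one_sub {t : ℝ} (h₀ : 0 ≤ t) (h₁ : t ≤ 1) :
    1 ≤ √t + √(1 - t) := by
  have : t ≤ √t := le_sqrt_self_iff.mpr h₁
  have : 1 - t ≤ √(1 - t) := le_sqrt_self_iff.mpr (by linarith)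
  linarith

lemma inv_mul_le_inv_add_inv {a b : ℝ} (ha : 0 ≤ a) (hb : 0 ≤ b) (hab : 1 ≤ a + b) :
    (a * b)⁻¹ ≤ a⁻¹ + b⁻¹ := by
  rcases ha.eq_or_lt with rfl | ha
  · simpa using hb
  rcases hb.eq_or_lt with rfl | hb
  · simpa using ha.le
  rw [inv_add_inv ha.ne' hb.ne', ← one_div]
  gcongr

lemma inv_sqrt_mul_one_sub_le {t : ℝ} (h₀ : 0 ≤ t) (h₁ : t ≤ 1) :
    (√(t * (1 - t)))⁻¹ ≤ (√t)⁻¹ + (√(1 - t))⁻¹ := by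
  rw [sqrt_mul h₀]
  exact inv_mul_le_inv_add_inv (sqrt_nonneg _) (sqrt_nonneg _) (one_le_sqrt_add_sqrt_one_sub h₀ h₁)

lemma intervalIntegrable_inv_sqrt (a b : ℝ) :
    IntervalIntegrable (fun t => (√t)⁻¹) volume a b := by
  refine (intervalIntegrable_rpow' (r := -(1 / 2)) (by norm_num)).mono_fun
    (by fun_prop) (Eventually.of_forall fun t => ?_)
  rcases le_or_gt 0 t with ht | ht
  · simp only [rpow_neg ht, sqrt_eq_rpow, le_refl]
  · simp [sqrt_eq_zero'.mpr ht.le]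

lemma intervalIntegrable_inv_sqrt_add_inv_sqrt_one_sub :
    IntervalIntegrable (fun t => (√t)⁻¹ + (√(1 - t))⁻¹) volume 0 1 := by
  refine (intervalIntegrable_inv_sqrt 0 1).add ?_
  simpa using ((intervalIntegrable_inv_sqrt 0 1).comp_sub_left 1).symm

lemma abs_mul_sqrt_div_sqrt_one_add_sq_mul_le_one (η : ℝ) {x : ℝ} (hx : 0 ≤ x) :
    |η * √x / √(1 + η ^ 2 * x)| ≤ 1 := by
  rw [abs_div, abs_of_nonneg (sqrt_nonneg _)]
  refine div_le_one_of_le₀ (abs_le_sqrt ?_) (sqrt_nonneg _)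
  rw [mul_pow, sq_sqrt hx]
  linarith

lemma one_add_sq_sub_one_mul_nonneg (τ : ℝ) {t : ℝ} (h₀ : 0 ≤ t) (h₁ : t ≤ 1) :
    0 ≤ 1 + (τ ^ 2 - 1) * t := by
  nlinarith [mul_nonneg (sq_nonneg τ) h₀]

lemma norm_serrinTheta_integrand_le (η τ : ℝ) {t : ℝ} (h₀ : 0 ≤ t) (h₁ : t ≤ 1) :
    ‖η * √(1 + (τ ^ 2 - 1) * t) / √(1 + η ^ 2 * (1 + (τ ^ 2 - 1) * t)) / √(t * (1 - t))‖
      ≤ (√t)⁻¹ + (√(1 - t))⁻¹ := by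
  have hX := one_add_sq_sub_one_mul_nonneg τ h₀ h₁
  calc _ = |η * √(1 + (τ ^ 2 - 1) * t) / √(1 + η ^ 2 * (1 + (τ ^ 2 - 1) * t))|
          * (√(t * (1 - t)))⁻¹ := by
        rw [norm_eq_abs, div_eq_mul_inv, abs_mul, abs_inv, abs_of_nonneg (sqrt_nonneg _)]
    _ ≤ 1 * (√(t * (1 - t)))⁻¹ := by
        gcongr
        exact abs_mul_sqrt_div_sqrt_one_add_sq_mul_le_one η hX
    _ ≤ (√t)⁻¹ + (√(1 - t))⁻¹ := by
        rw [one_mul]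
        exact inv_sqrt_mul_one_sub_le h₀ h₁

theorem continuous_serrinTheta (η : ℝ) : Continuous (SerrinTheta η) := by
  unfold SerrinTheta
  refine continuous_of_dominated_interval (bound := fun t => (√t)⁻¹ + (√(1 - t))⁻¹)
    (fun τ => (by fun_prop : Measurable _).aestronglyMeasurable)
    (fun τ => Eventually.of_forall fun t ht => ?_)
    intervalIntegrable_inv_sqrt_add_inv_sqrt_one_sub (Eventually.of_forall fun t ht => ?_)
  all_goals rw [uIoc_of_le zero_le_one] at ht
  · exact norm_serrinTheta_integrand_le η τ ht.1.le ht.2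
  · refine Continuous.div_const (Continuous.div (by fun_prop) (by fun_prop) fun τ => ?_) _
    have := one_add_sq_sub_one_mul_nonneg τ ht.1.le ht.2
    positivity

theorem serrinTheta_zero (η : ℝ) :
    SerrinTheta η 0 = ∫ t in (0 : ℝ)..1, η / (√t * √(1 + η ^ 2 * (1 - t))) := by
  refine integral_congr_ae ((volume.ae_ne 1).mono fun t ht₁ ht => ?_)
  rw [uIoc_of_le zero_le_one] at ht
  have h₁ : 0 < 1 - t := sub_pos.mpr (lt_of_le_of_ne ht.2 ht₁)
  have hX : (1 : ℝ) + ((0 : ℝ) ^ 2 - 1) * t = 1 - t := by ring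
  rw [hX, sqrt_mul ht.1.le]
  field_simp

/-- Equation (4.15): `∫₀¹ η/(√t·√(1+η²(1−t))) dt = 2 arctan η`, and consequently
`Θ(η,τ) → 2 arctan η` as `τ → 0⁺`. -/
theorem theta_limit_as_tau_to_zero (η : ℝ) (hη : 0 < η) :
    (∫ t in (0 : ℝ)..1, η / (Real.sqrt t * Real.sqrt (1 + η ^ 2 * (1 - t))))
      = 2 * Real.arctan η ∧
    Filter.Tendsto (fun τ => SerrinTheta η τ) (nhdsWithin 0 (Ioi 0))
      (nhds (2 * Real.arctan η)) := by
  have hintegral := integral_div_sqrt_mul_sqrt_eq_two_mul_arctan hη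
  refine ⟨hintegral, ?_⟩
  rw [← hintegral, ← serrinTheta_zero]
  exact (continuous_serrinTheta η).continuousWithinAt.tendsto
end

section
/- Let δ ∈ ℝ and let α, β : J → ℝ be C² functions on an open interval J solving α'' = δα − 2α²β and β'' = δβ − 2αβ² on J. Suppose 0 ∈ J with α(0) = 0 and α'(0)·β(0) > 0, and suppose there are points x_a⁻ < x_b⁻ < 0 < x_b⁺ < x_a⁺ in J such that α(x_a⁻) = α(x_a⁺) = 0, α < 0 on (x_a⁻, 0), α > 0 on (0, x_a⁺), β(x_b⁻) = β(x_b⁺) = 0, β < 0 on (x_a⁻, x_b⁻) ∪ (x_b⁺, x_a⁺), and β > 0 on (x_b⁻, x_b⁺). Then for every s ∈ (x_b⁻, 0) there exists a unique s* ∈ (x_b⁺, x_a⁺) with β(s)·α(s*) = β(s*)·α(s), and the map s ↦ s* is strictly increasing on (x_b⁻, 0). -/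
/-!
Both `α` and `β` solve the linear equation `y'' = (δ - 2αβ) y`, so their Wronskian
`α'β - αβ'` is constant on `J`, equal to `α'(0)β(0) > 0`. Hence `(β/α)' = -(α'β - αβ')/α² < 0`
wherever `α ≠ 0`, so `β/α` is strictly decreasing on `(x_b⁻, 0)` and on `(x_b⁺, x_a⁺)`, and
`s*` is the point of the second interval where `β/α` takes its value at `s`. On `(x_b⁺, x_a⁺)`
the ratio starts at `0` and tends to `-∞`, because `β(x_a⁺) < 0` (it is `≤ 0` by continuity and
nonzero since the Wronskian at `x_a⁺` is `α'(x_a⁺)β(x_a⁺)`); the intermediate value theorem gives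
existence, injectivity gives uniqueness, and composing one decreasing branch with the inverse of
the other gives an increasing map.
-/

open Set Filter Topology

theorem Set.OrdConnected.eq_of_hasDerivAt_eq_zero {E : Type*} [NormedAddCommGroup E]
    [NormedSpace ℝ E] {f : ℝ → E} {s : Set ℝ} (hs : s.OrdConnected)
    (hf : ∀ x ∈ s, HasDerivAt f 0 x) {x y : ℝ} (hx : x ∈ s) (hy : y ∈ s) : f x = f y := by
  have h := hs.convex.norm_image_sub_le_of_norm_hasDerivWithin_le
    (fun z hz => (hf z hz).hasDerivWithinAt) (fun _ _ => norm_zero.le) hx hy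
  rw [zero_mul, norm_le_zero_iff, sub_eq_zero] at h
  exact h.symm

theorem ContinuousAt.nonpos_of_neg_on_Ioo {f : ℝ → ℝ} {a b : ℝ} (hab : a < b)
    (hf : ContinuousAt f b) (hneg : ∀ x ∈ Ioo a b, f x < 0) : f b ≤ 0 :=
  le_of_tendsto (hf.tendsto.mono_left nhdsWithin_le_nhds)
    (eventually_of_mem (Ioo_mem_nhdsLT hab) fun x hx => (hneg x hx).le)

theorem exists_mem_Ioo_mul_eq_mul {f g : ℝ → ℝ} {a b u v : ℝ} (hab : a ≤ b)
    (hf : ContinuousOn f (Icc a b)) (hg : ContinuousOn g (Icc a b)) (hu : 0 < u) (hv : v < 0)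
    (hfa : 0 < f a) (hga : g a = 0) (hfb : f b = 0) (hgb : g b < 0) :
    ∃ t ∈ Ioo a b, u * f t = g t * v := by
  have hP : ContinuousOn (fun t => u * f t - g t * v) (Icc a b) :=
    (continuousOn_const.mul hf).sub (hg.mul continuousOn_const)
  have hPb : u * f b - g b * v < 0 := by
    rw [hfb, mul_zero, zero_sub]; exact neg_neg_of_pos (mul_pos_of_neg_of_neg hgb hv)
  have hPa : 0 < u * f a - g a * v := by rw [hga, zero_mul, sub_zero]; exact mul_pos hu hfa
  obtain ⟨t, ht, hPt⟩ := intermediate_value_Ioo' hab hP ⟨hPb, hPa⟩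
  exact ⟨t, ht, sub_eq_zero.1 hPt⟩

theorem exists_strictMonoOn_of_strictAntiOn {ι κ : Type*} [LinearOrder ι] [Preorder κ]
    {g : ι → κ} {A B : Set ι} (hA : StrictAntiOn g A) (hB : StrictAntiOn g B)
    (h : ∀ s ∈ A, ∃ t ∈ B, g t = g s) :
    ∃ F : ι → ι, (∀ s ∈ A, F s ∈ B ∧ g (F s) = g s ∧ ∀ t ∈ B, g t = g s → t = F s) ∧
      StrictMonoOn F A := by
  choose! F hFB hFg using h
  refine ⟨F, fun s hs => ⟨hFB s hs, hFg s hs, fun t ht hts =>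
    hB.injOn ht (hFB s hs) (hts.trans (hFg s hs).symm)⟩, fun s hs s' hs' hss' => ?_⟩
  have hlt : g (F s') < g (F s) := by rw [hFg s hs, hFg s' hs']; exact hA hs hs' hss'
  exact (hB.lt_iff_gt (hFB s' hs') (hFB s hs)).1 hlt

section Wronskian

variable {α β α' β' α'' β'' : ℝ → ℝ}

theorem hasDerivAt_wronskian_eq_zero {x : ℝ} (q : ℝ) (hα : HasDerivAt α (α' x) x)
    (hα' : HasDerivAt α' (α'' x) x) (hβ : HasDerivAt β (β' x) x)
    (hβ' : HasDerivAt β' (β'' x) x) (hαq : α'' x = q * α x) (hβq : β'' x = q * β x) :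
    HasDerivAt (fun y => α' y * β y - α y * β' y) 0 x :=
  ((hα'.mul hβ).sub (hα.mul hβ')).congr_deriv (by rw [hαq, hβq]; ring)

theorem hasDerivAt_div_of_wronskian {x : ℝ} (hα : HasDerivAt α (α' x) x)
    (hβ : HasDerivAt β (β' x) x) (hαx : α x ≠ 0) :
    HasDerivAt (fun y => β y / α y) (-(α' x * β x - α x * β' x) / α x ^ 2) x :=
  (hβ.div hα hαx).congr_deriv (by ring)

theorem strictAntiOn_div_of_wronskian_pos {D : Set ℝ} (hD : Convex ℝ D)
    (hα : ∀ x ∈ D, HasDerivAt α (α' x) x) (hβ : ∀ x ∈ D, HasDerivAt β (β' x) x)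
    (hα0 : ∀ x ∈ D, α x ≠ 0) (hW : ∀ x ∈ D, 0 < α' x * β x - α x * β' x) :
    StrictAntiOn (fun x => β x / α x) D := by
  refine strictAntiOn_of_hasDerivWithinAt_neg hD
    (fun x hx => ((hβ x hx).continuousAt.div (hα x hx).continuousAt (hα0 x hx)).continuousWithinAt)
    (fun x hx => (hasDerivAt_div_of_wronskian (hα x (interior_subset hx))
      (hβ x (interior_subset hx)) (hα0 x (interior_subset hx))).hasDerivWithinAt)
    fun x hx => ?_
  have hx := interior_subset hx
  exact div_neg_of_neg_of_pos (neg_neg_of_pos (hW x hx)) (sq_pos_of_ne_zero (hα0 x hx))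

theorem wronskian_eq_of_coupled_system (δ : ℝ) {J : Set ℝ} (hJ : J.OrdConnected)
    (hα : ∀ x ∈ J, HasDerivAt α (α' x) x) (hα' : ∀ x ∈ J, HasDerivAt α' (α'' x) x)
    (hβ : ∀ x ∈ J, HasDerivAt β (β' x) x) (hβ' : ∀ x ∈ J, HasDerivAt β' (β'' x) x)
    (hODEα : ∀ x ∈ J, α'' x = δ * α x - 2 * α x ^ 2 * β x)
    (hODEβ : ∀ x ∈ J, β'' x = δ * β x - 2 * α x * β x ^ 2) {x y : ℝ} (hx : x ∈ J) (hy : y ∈ J) :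
    α' x * β x - α x * β' x = α' y * β y - α y * β' y :=
  hJ.eq_of_hasDerivAt_eq_zero (fun z hz =>
    hasDerivAt_wronskian_eq_zero (δ - 2 * α z * β z) (hα z hz) (hα' z hz) (hβ z hz) (hβ' z hz)
      (by rw [hODEα z hz]; ring) (by rw [hODEβ z hz]; ring)) hx hy

end Wronskian

theorem conjugate_point_exists_unique_monotone_general
    (δ : ℝ) (J : Set ℝ) (hJconn : J.OrdConnected)
    (α β α' β' α'' β'' : ℝ → ℝ)
    (hα' : ∀ x ∈ J, HasDerivAt α (α' x) x)
    (hα'' : ∀ x ∈ J, HasDerivAt α' (α'' x) x)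
    (hβ' : ∀ x ∈ J, HasDerivAt β (β' x) x)
    (hβ'' : ∀ x ∈ J, HasDerivAt β' (β'' x) x)
    (hODEα : ∀ x ∈ J, α'' x = δ * α x - 2 * (α x) ^ 2 * β x)
    (hODEβ : ∀ x ∈ J, β'' x = δ * β x - 2 * α x * (β x) ^ 2)
    (h0J : (0 : ℝ) ∈ J) (hα0 : α 0 = 0) (hpos : 0 < α' 0 * β 0)
    (xam xbm xbp xap : ℝ)
    (hamJ : xam ∈ J) (hapJ : xap ∈ J)
    (h1 : xam < xbm) (h2 : xbm < 0) (h3 : 0 < xbp) (h4 : xbp < xap)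
    (hαap : α xap = 0)
    (hαneg : ∀ x ∈ Ioo xam (0 : ℝ), α x < 0)
    (hαpos : ∀ x ∈ Ioo (0 : ℝ) xap, 0 < α x)
    (hβbp : β xbp = 0)
    (hβneg2 : ∀ x ∈ Ioo xbp xap, β x < 0)
    (hβpos : ∀ x ∈ Ioo xbm xbp, 0 < β x) :
    ∃ F : ℝ → ℝ,
      (∀ s ∈ Ioo xbm (0 : ℝ),
        F s ∈ Ioo xbp xap ∧
        β s * α (F s) = β (F s) * α s ∧
        (∀ t ∈ Ioo xbp xap, β s * α t = β t * α s → t = F s)) ∧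
      StrictMonoOn F (Ioo xbm 0) := by
  have hIcc : Icc xam xap ⊆ J := hJconn.out hamJ hapJ
  have hL : Ioo xbm 0 ⊆ J :=
    Ioo_subset_Icc_self.trans ((Icc_subset_Icc h1.le (h3.trans h4).le).trans hIcc)
  have hR : Icc xbp xap ⊆ J := (Icc_subset_Icc (h1.trans h2 |>.trans h3).le le_rfl).trans hIcc
  have hW : ∀ x ∈ J, 0 < α' x * β x - α x * β' x := fun x hx => by
    rwa [wronskian_eq_of_coupled_system δ hJconn hα' hα'' hβ' hβ'' hODEα hODEβ hx h0J, hα0,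
      zero_mul, sub_zero]
  have hanti : ∀ D ⊆ J, Convex ℝ D → (∀ x ∈ D, α x ≠ 0) →
      StrictAntiOn (fun x => β x / α x) D := fun D hD hconv hαD =>
    strictAntiOn_div_of_wronskian_pos hconv (fun x hx => hα' x (hD hx))
      (fun x hx => hβ' x (hD hx)) hαD fun x hx => hW x (hD hx)
  have hαL : ∀ s ∈ Ioo xbm (0 : ℝ), α s < 0 := fun s hs => hαneg s ⟨h1.trans hs.1, hs.2⟩
  have hαR : ∀ t ∈ Ioo xbp xap, 0 < α t := fun t ht => hαpos t ⟨h3.trans ht.1, ht.2⟩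
  have hratio : ∀ s ∈ Ioo xbm (0 : ℝ), ∀ t ∈ Ioo xbp xap,
      β t / α t = β s / α s ↔ β s * α t = β t * α s := fun s hs t ht =>
    (div_eq_div_iff (hαR t ht).ne' (hαL s hs).ne).trans eq_comm
  have hβap : β xap < 0 :=
    (ContinuousAt.nonpos_of_neg_on_Ioo h4 (hβ' xap hapJ).continuousAt hβneg2).lt_of_ne
      fun h => (hW xap hapJ).ne' (by rw [h, hαap]; ring)
  have hex : ∀ s ∈ Ioo xbm (0 : ℝ), ∃ t ∈ Ioo xbp xap, β t / α t = β s / α s := fun s hs => by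
    obtain ⟨t, ht, hst⟩ := exists_mem_Ioo_mul_eq_mul h4.le
      (fun x hx => (hα' x (hR hx)).continuousAt.continuousWithinAt)
      (fun x hx => (hβ' x (hR hx)).continuousAt.continuousWithinAt)
      (hβpos s ⟨hs.1, hs.2.trans h3⟩) (hαL s hs) (hαpos xbp ⟨h3, h4⟩) hβbp hαap hβap
    exact ⟨t, ht, (hratio s hs t ht).2 hst⟩
  obtain ⟨F, hF, hmono⟩ := exists_strictMonoOn_of_strictAntiOn
    (hanti _ hL (convex_Ioo _ _) fun s hs => (hαL s hs).ne)
    (hanti _ (Ioo_subset_Icc_self.trans hR) (convex_Ioo _ _) fun t ht => (hαR t ht).ne') hex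
  refine ⟨F, fun s hs => ?_, hmono⟩
  obtain ⟨hFs, hratioF, huniq⟩ := hF s hs
  exact ⟨hFs, (hratio s hs _ hFs).1 hratioF,
    fun t ht hst => huniq t ht ((hratio s hs t ht).2 hst)⟩

/-- Lemma 5.2: for solutions of `α'' = δα − 2α²β`, `β'' = δβ − 2αβ²` with `α(0) = 0`,
`α'(0)β(0) > 0`, and the stated zero/sign pattern, every `s ∈ (x_b⁻, 0)` admits a unique
`s* ∈ (x_b⁺, x_a⁺)` with `β(s)α(s*) = β(s*)α(s)`, and `s ↦ s*` is strictly increasing. -/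
theorem conjugate_point_exists_unique_monotone
    (δ : ℝ) (J : Set ℝ) (hJopen : IsOpen J) (hJconn : J.OrdConnected)
    (α β α' β' α'' β'' : ℝ → ℝ)
    (hα' : ∀ x ∈ J, HasDerivAt α (α' x) x)
    (hα'' : ∀ x ∈ J, HasDerivAt α' (α'' x) x)
    (hβ' : ∀ x ∈ J, HasDerivAt β (β' x) x)
    (hβ'' : ∀ x ∈ J, HasDerivAt β' (β'' x) x)
    (hODEα : ∀ x ∈ J, α'' x = δ * α x - 2 * (α x) ^ 2 * β x)
    (hODEβ : ∀ x ∈ J, β'' x = δ * β x - 2 * α x * (β x) ^ 2)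
    (h0J : (0 : ℝ) ∈ J) (hα0 : α 0 = 0) (hpos : 0 < α' 0 * β 0)
    (xam xbm xbp xap : ℝ)
    (hamJ : xam ∈ J) (hapJ : xap ∈ J)
    (h1 : xam < xbm) (h2 : xbm < 0) (h3 : 0 < xbp) (h4 : xbp < xap)
    (hαam : α xam = 0) (hαap : α xap = 0)
    (hαneg : ∀ x ∈ Ioo xam (0 : ℝ), α x < 0)
    (hαpos : ∀ x ∈ Ioo (0 : ℝ) xap, 0 < α x)
    (hβbm : β xbm = 0) (hβbp : β xbp = 0)
    (hβneg1 : ∀ x ∈ Ioo xam xbm, β x < 0)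
    (hβneg2 : ∀ x ∈ Ioo xbp xap, β x < 0)
    (hβpos : ∀ x ∈ Ioo xbm xbp, 0 < β x) :
    ∃ F : ℝ → ℝ,
      (∀ s ∈ Ioo xbm (0 : ℝ),
        F s ∈ Ioo xbp xap ∧
        β s * α (F s) = β (F s) * α s ∧
        (∀ t ∈ Ioo xbp xap, β s * α t = β t * α s → t = F s)) ∧
      StrictMonoOn F (Ioo xbm 0) :=
  conjugate_point_exists_unique_monotone_general δ J hJconn α β α' β' α'' β'' hα' hα'' hβ' hβ''
    hODEα hODEβ h0J hα0 hpos xam xbm xbp xap hamJ hapJ h1 h2 h3 h4 hαap hαneg hαpos hβbp hβneg2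
    hβpos
end

section
/- Let τ ∈ (0,1] and δ = −(τ + 1/τ), and let α be the maximal solution of the ODE α'' = δα + 2α³ with α(0) = 0 and α'(0) = 1. Then α is defined on all of ℝ and satisfies α'(x)² = α(x)⁴ + δ·α(x)² + 1 = (α(x)² − τ)·(α(x)² − 1/τ) and −√τ ≤ α(x) ≤ √τ for all x ∈ ℝ. If τ = 1, then α(x) = tanh(x) for all x ∈ ℝ. If τ ∈ (0,1), then α is periodic and attains both of the values √τ and −√τ. -/
/-!
For `τ = 1` the solution is `tanh`. For `τ < 1` write `α = √τ sin θ`: the first integral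
`α'² = (α² - τ)(α² - 1/τ)` becomes `θ'² = 1/τ - τ sin² θ`, whose right-hand side is positive
and `2π`-periodic. The autonomous equation `θ' = √(1/τ - τ sin² θ)` is solved globally by
inverting the travel time `y ↦ ∫₀^y dt / √(1/τ - τ sin² t)`, and `θ` advances by exactly `2π`
over each period of that time, so `α` is periodic and sweeps out `[-√τ, √τ]`.
-/

open Real Function Filter intervalIntegral

/-- The time the solution of `θ' = g θ`, `θ 0 = 0`, needs to reach `y`. -/
noncomputable def flowTime (g : ℝ → ℝ) (y : ℝ) : ℝ := ∫ t in (0 : ℝ)..y, (g t)⁻¹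

section flowTime

variable {g : ℝ → ℝ}

lemma flowTime_zero : flowTime g 0 = 0 := integral_same

lemma hasDerivAt_flowTime (hg : Continuous g) (hg0 : ∀ y, g y ≠ 0) (y : ℝ) :
    HasDerivAt (flowTime g) (g y)⁻¹ y :=
  have hinv : Continuous fun t => (g t)⁻¹ := hg.inv₀ hg0
  integral_hasDerivAt_right (hinv.intervalIntegrable _ _) (hinv.stronglyMeasurableAtFilter _ _)
    hinv.continuousAt

lemma strictMono_flowTime (hg : Continuous g) (hpos : ∀ y, 0 < g y) :
    StrictMono (flowTime g) :=
  strictMono_of_hasDerivAt_pos (hasDerivAt_flowTime hg fun y => (hpos y).ne')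
    fun y => inv_pos.2 (hpos y)

lemma flowTime_surjective {M : ℝ} (hg : Continuous g) (hpos : ∀ y, 0 < g y)
    (hM : ∀ y, g y ≤ M) : Surjective (flowTime g) := by
  have hM0 : 0 < M := (hpos 0).trans_le (hM 0)
  have hderiv := hasDerivAt_flowTime hg fun y => (hpos y).ne'
  have hmono : Monotone fun y => flowTime g y - y / M :=
    monotone_of_hasDerivAt_nonneg (fun y => (hderiv y).sub ((hasDerivAt_id y).div_const M))
      fun y => by simpa [one_div] using inv_anti₀ (hpos y) (hM y)
  have hlow : ∀ y, 0 ≤ y → y / M ≤ flowTime g y := fun y hy => by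
    simpa [flowTime_zero] using hmono hy
  have hup : ∀ y, y ≤ 0 → flowTime g y ≤ y / M := fun y hy => by
    simpa [flowTime_zero] using hmono hy
  refine Continuous.surjective (continuous_iff_continuousAt.2 fun y => (hderiv y).continuousAt)
    (tendsto_atTop_mono' _ (eventually_atTop.2 ⟨0, hlow⟩) (tendsto_id.atTop_div_const hM0))
    (tendsto_atBot_mono' _ (eventually_atBot.2 ⟨0, hup⟩) (tendsto_id.atBot_div_const hM0))

lemma flowTime_add_period {p : ℝ} (hg : Continuous g) (hg0 : ∀ y, g y ≠ 0) (hper : Periodic g p)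
    (y : ℝ) : flowTime g (y + p) = flowTime g y + flowTime g p := by
  have hint (a b : ℝ) : IntervalIntegrable (fun t => (g t)⁻¹) MeasureTheory.volume a b :=
    (hg.inv₀ hg0).intervalIntegrable a b
  have hshift : ∫ t in p..y + p, (g t)⁻¹ = flowTime g y := by
    have := integral_comp_add_right (fun t => (g t)⁻¹) p (a := 0) (b := y)
    simp only [show ∀ t, g (t + p) = g t from hper, zero_add] at this
    exact this.symm
  rw [flowTime, ← integral_add_adjacent_intervals (hint 0 p) (hint p (y + p)), hshift, add_comm]
  rfl

theorem exists_flow_of_periodic {p : ℝ} (hg : Continuous g) (hpos : ∀ y, 0 < g y) (hp : 0 < p)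
    (hper : Periodic g p) :
    ∃ θ : ℝ → ℝ, (∀ x, HasDerivAt θ (g (θ x)) x) ∧ θ 0 = 0 ∧ Surjective θ ∧
      ∃ T > 0, ∀ x, θ (x + T) = θ x + p := by
  obtain ⟨M, hM⟩ := (hper.compact_of_continuous hp.ne' hg).bddAbove
  have hg0 : ∀ y, g y ≠ 0 := fun y => (hpos y).ne'
  let e := (strictMono_flowTime hg hpos).orderIsoOfSurjective _
    (flowTime_surjective hg hpos fun y => hM (Set.mem_range_self y))
  refine ⟨e.symm, fun x => ?_, e.symm_apply_eq.2 flowTime_zero.symm, e.symm.surjective,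
    flowTime g p, flowTime_zero (g := g) ▸ strictMono_flowTime hg hpos hp, fun x => ?_⟩
  · simpa using HasDerivAt.of_local_left_inverse e.symm.continuous.continuousAt
      (hasDerivAt_flowTime hg hg0 (e.symm x)) (inv_ne_zero (hg0 _))
      (Eventually.of_forall e.apply_symm_apply)
  · refine e.symm_apply_eq.2 ?_
    change x + flowTime g p = flowTime g (e.symm x + p)
    rw [flowTime_add_period hg hg0 hper]
    exact congrArg (· + flowTime g p) (e.apply_symm_apply x).symm

end flowTime

lemma hasDerivAt_sqrt_comp_of_hasDerivAt_sqrt {h θ : ℝ → ℝ} {h' x : ℝ}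
    (hh : HasDerivAt h h' (θ x)) (hθ : HasDerivAt θ (√(h (θ x))) x) (hpos : 0 < h (θ x)) :
    HasDerivAt (fun x => √(h (θ x))) (h' / 2) x := by
  refine ((hh.comp x hθ).sqrt hpos.ne').congr_deriv ?_
  field_simp [(sqrt_pos.2 hpos).ne']
  rfl

lemma one_div_sub_mul_sin_sq_pos {τ : ℝ} (hτ0 : 0 < τ) (hτ1 : τ < 1) (y : ℝ) :
    0 < 1 / τ - τ * sin y ^ 2 := by
  have h1τ : τ < 1 / τ := by rw [lt_div_iff₀ hτ0]; nlinarith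
  nlinarith [sin_sq_le_one y]

theorem exists_periodic_solution_of_lt_one {τ : ℝ} (hτ0 : 0 < τ) (hτ1 : τ < 1) :
    ∃ α α' : ℝ → ℝ, (∀ x, HasDerivAt α (α' x) x) ∧
      (∀ x, HasDerivAt α' (-(τ + 1 / τ) * α x + 2 * α x ^ 3) x) ∧ α 0 = 0 ∧ α' 0 = 1 ∧
      (∀ x, α' x ^ 2 = (α x ^ 2 - τ) * (α x ^ 2 - 1 / τ)) ∧
      (∀ x, -√τ ≤ α x ∧ α x ≤ √τ) ∧
      (∃ T, 0 < T ∧ Periodic α T) ∧ (∃ x, α x = √τ) ∧ ∃ x, α x = -√τ := by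
  set h : ℝ → ℝ := fun y => 1 / τ - τ * sin y ^ 2
  have hpos : ∀ y, 0 < h y := one_div_sub_mul_sin_sq_pos hτ0 hτ1
  obtain ⟨θ, hθ, hθ0, hθsurj, T, hT, hθT⟩ := exists_flow_of_periodic (g := fun y => √(h y))
    (by fun_prop) (fun y => sqrt_pos.2 (hpos y)) two_pi_pos fun y => by simp [h, sin_add_two_pi]
  have hτ : √τ ^ 2 = τ := sq_sqrt hτ0.le
  have hh (y : ℝ) : √(h y) ^ 2 = h y := sq_sqrt (hpos y).le
  have hh' (y : ℝ) : HasDerivAt h (-(τ * (2 * sin y * cos y))) y :=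
    ((((hasDerivAt_sin y).pow 2).const_mul τ).const_sub (1 / τ)).congr_deriv (by ring)
  refine ⟨fun x => √τ * sin (θ x), fun x => √τ * (cos (θ x) * √(h (θ x))),
    fun x => ((hasDerivAt_sin _).comp x (hθ x)).const_mul _, fun x => ?_, by simp [hθ0], ?_,
    fun x => ?_, fun x => ?_, ⟨T, hT, fun x => by simp [hθT, sin_add_two_pi]⟩, ?_, ?_⟩
  · refine ((((hasDerivAt_cos _).comp x (hθ x)).mul
      (hasDerivAt_sqrt_comp_of_hasDerivAt_sqrt (hh' _) (hθ x) (hpos _))).const_mul _).congr_deriv ?_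
    have hS : √(h (θ x)) ^ 2 = 1 / τ - τ * sin (θ x) ^ 2 := hh _
    simp only [Function.comp_apply]
    linear_combination (-√τ * sin (θ x)) * hS + (-√τ * τ * sin (θ x)) * cos_sq' (θ x)
      + (-2 * √τ * sin (θ x) ^ 3) * hτ
  · simp only [hθ0, cos_zero, sin_zero, h]
    rw [one_mul, ← sqrt_mul hτ0.le]
    norm_num [hτ0.ne']
  · simp only [mul_pow, hτ, hh, cos_sq', h]
    field_simp
    ring
  · exact ⟨by nlinarith [neg_one_le_sin (θ x), sqrt_nonneg τ],
      by nlinarith [sin_le_one (θ x), sqrt_nonneg τ]⟩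
  · obtain ⟨x, hx⟩ := hθsurj (π / 2)
    exact ⟨x, by simp [hx]⟩
  · obtain ⟨x, hx⟩ := hθsurj (-(π / 2))
    exact ⟨x, by simp [hx]⟩

theorem Real.hasDerivAt_tanh (x : ℝ) : HasDerivAt tanh (1 - tanh x ^ 2) x := by
  have hcosh : cosh x ≠ 0 := (cosh_pos x).ne'
  have hquot := (hasDerivAt_sinh x).div (hasDerivAt_cosh x) hcosh
  rw [show sinh / cosh = tanh from funext fun y => (tanh_eq_sinh_div_cosh y).symm] at hquot
  refine hquot.congr_deriv ?_
  rw [tanh_eq_sinh_div_cosh]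
  field_simp

theorem Real.hasDerivAt_one_sub_tanh_sq (x : ℝ) :
    HasDerivAt (fun y => 1 - tanh y ^ 2) (-2 * tanh x + 2 * tanh x ^ 3) x :=
  (((hasDerivAt_tanh x).pow 2).const_sub 1).congr_deriv (by ring)

/-- Section 8.1: the solution of `α'' = δα + 2α³`, `δ = −(τ + 1/τ)`, `α(0) = 0`,
`α'(0) = 1`, with `τ ∈ (0,1]`, is globally defined and satisfies
`α'² = α⁴ + δα² + 1 = (α² − τ)(α² − 1/τ)` and `|α| ≤ √τ`; it equals `tanh` for `τ = 1`
and is periodic, attaining `±√τ`, for `τ ∈ (0,1)`. -/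
theorem planar_capillary_coefficient_ode
    (τ : ℝ) (hτ0 : 0 < τ) (hτ1 : τ ≤ 1)
    (δ : ℝ) (hδ : δ = -(τ + 1 / τ)) :
    ∃ α α' : ℝ → ℝ,
      (∀ x, HasDerivAt α (α' x) x) ∧
      (∀ x, HasDerivAt α' (δ * α x + 2 * (α x) ^ 3) x) ∧
      α 0 = 0 ∧ α' 0 = 1 ∧
      (∀ x, (α' x) ^ 2 = (α x) ^ 4 + δ * (α x) ^ 2 + 1) ∧
      (∀ x, (α x) ^ 4 + δ * (α x) ^ 2 + 1 = ((α x) ^ 2 - τ) * ((α x) ^ 2 - 1 / τ)) ∧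
      (∀ x, -Real.sqrt τ ≤ α x ∧ α x ≤ Real.sqrt τ) ∧
      (τ = 1 → ∀ x, α x = Real.tanh x) ∧
      (τ < 1 →
        (∃ T : ℝ, 0 < T ∧ Function.Periodic α T) ∧
        (∃ x, α x = Real.sqrt τ) ∧ (∃ x, α x = -Real.sqrt τ)) := by
  have hfactor (a : ℝ) : a ^ 4 + δ * a ^ 2 + 1 = (a ^ 2 - τ) * (a ^ 2 - 1 / τ) := by
    rw [hδ]
    field_simp
    ring
  rcases hτ1.lt_or_eq with hlt | rfl
  · obtain ⟨α, α', hα, hα', h0, h0', henergy, hbound, hper, hmax, hmin⟩ :=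
      exists_periodic_solution_of_lt_one hτ0 hlt
    exact ⟨α, α', hα, hδ ▸ hα', h0, h0', fun x => (henergy x).trans (hfactor _).symm,
      fun x => hfactor _, hbound, fun h => absurd h hlt.ne, fun _ => ⟨hper, hmax, hmin⟩⟩
  · have hδ' : δ = -2 := by norm_num [hδ]
    subst hδ'
    refine ⟨tanh, fun x => 1 - tanh x ^ 2, hasDerivAt_tanh, hasDerivAt_one_sub_tanh_sq, tanh_zero,
      by simp, fun x => by ring, fun x => hfactor _, fun x => ?_, fun _ _ => rfl,
      fun h => absurd h (lt_irrefl 1)⟩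
    rw [sqrt_one]
    exact ⟨(neg_one_lt_tanh x).le, (tanh_lt_one x).le⟩
end

section
/- Let U ⊆ ℂ be open and contain I × {0} for some open interval I ⊆ ℝ, let ω : U → ℝ be harmonic (smooth with ω_xx + ω_yy = 0), and let η : U → ℂ be defined by η(x+iy) = (ω_x(x,y) − i·ω_y(x,y))/2, which is holomorphic on U. Suppose α, β ∈ ℝ are constants such that 2ω_y(x,0) = −α·e^{−ω(x,0)} − β·e^{ω(x,0)} for all x ∈ I. Define h₁ : U → ℝ by h₁ = Re(η'' − 2η³), where η'' denotes the second complex derivative of η. Then 2·(∂h₁/∂y)(x,0) = ( α·e^{−ω(x,0)} − β·e^{ω(x,0)} )·h₁(x,0) for all x ∈ I. -/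
open Set

lemma deriv_eq_on (I : Set ℝ) (hI : IsOpen I) {f g f' g' : ℝ → ℝ}
    (hf : ∀ x ∈ I, HasDerivAt f (f' x) x) (hg : ∀ x ∈ I, HasDerivAt g (g' x) x)
    (hfg : ∀ x ∈ I, f x = g x) : ∀ x ∈ I, f' x = g' x := by
  intro x hx
  have heq : f =ᶠ[nhds x] g := Filter.eventuallyEq_of_mem (hI.mem_nhds hx) hfg
  exact (hf x hx).unique ((hg x hx).congr_of_eventuallyEq heq)

lemma mkdv_key (I : Set ℝ) (hI : IsOpen I)
    (A B P Q P₁ Q₁ P₂ Q₂ Q₃ : ℝ → ℝ)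
    (hA : ∀ x ∈ I, HasDerivAt A (-2 * P x * A x) x)
    (hB : ∀ x ∈ I, HasDerivAt B (2 * P x * B x) x)
    (hP : ∀ x ∈ I, HasDerivAt P (P₁ x) x)
    (hP1 : ∀ x ∈ I, HasDerivAt P₁ (P₂ x) x)
    (hQ : ∀ x ∈ I, HasDerivAt Q (Q₁ x) x)
    (hQ1 : ∀ x ∈ I, HasDerivAt Q₁ (Q₂ x) x)
    (hQ2 : ∀ x ∈ I, HasDerivAt Q₂ (Q₃ x) x)
    (hbc : ∀ x ∈ I, Q x = (A x + B x) / 4) :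
    ∀ x ∈ I, 2 * (-(Q₃ x - 6 * ((P x ^ 2 - Q x ^ 2) * Q₁ x + 2 * P x * Q x * P₁ x)))
      = (A x - B x) * (P₂ x - 2 * (P x ^ 3 - 3 * P x * Q x ^ 2)) := by
  have hAd : ∀ x ∈ I, HasDerivAt (fun x => -2 * P x * A x)
      (-2 * P₁ x * A x + -2 * P x * (-2 * P x * A x)) x :=
    fun x hx => ((hP x hx).const_mul (-2)).mul (hA x hx)
  have hBd : ∀ x ∈ I, HasDerivAt (fun x => 2 * P x * B x)
      (2 * P₁ x * B x + 2 * P x * (2 * P x * B x)) x :=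
    fun x hx => ((hP x hx).const_mul 2).mul (hB x hx)
  have hR1 : ∀ x ∈ I, HasDerivAt (fun x => (A x + B x) / 4)
      ((-2 * P x * A x + 2 * P x * B x) / 4) x :=
    fun x hx => ((hA x hx).add (hB x hx)).div_const 4
  have E1 : ∀ x ∈ I, Q₁ x = (-2 * P x * A x + 2 * P x * B x) / 4 :=
    deriv_eq_on I hI hQ hR1 hbc
  have hR2 : ∀ x ∈ I, HasDerivAt (fun x => (-2 * P x * A x + 2 * P x * B x) / 4)
      ((-2 * P₁ x * A x + -2 * P x * (-2 * P x * A x)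
        + (2 * P₁ x * B x + 2 * P x * (2 * P x * B x))) / 4) x :=
    fun x hx => ((hAd x hx).add (hBd x hx)).div_const 4
  have E2 : ∀ x ∈ I, Q₂ x = (-2 * P₁ x * A x + -2 * P x * (-2 * P x * A x)
        + (2 * P₁ x * B x + 2 * P x * (2 * P x * B x))) / 4 :=
    deriv_eq_on I hI hQ1 hR2 E1
  have hR3 : ∀ x ∈ I, HasDerivAt (fun x => (-2 * P₁ x * A x + -2 * P x * (-2 * P x * A x)
        + (2 * P₁ x * B x + 2 * P x * (2 * P x * B x))) / 4)
      (((-2 * P₂ x * A x + -2 * P₁ x * (-2 * P x * A x))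
        + (-2 * P₁ x * (-2 * P x * A x)
            + -2 * P x * (-2 * P₁ x * A x + -2 * P x * (-2 * P x * A x)))
        + ((2 * P₂ x * B x + 2 * P₁ x * (2 * P x * B x))
        + (2 * P₁ x * (2 * P x * B x)
            + 2 * P x * (2 * P₁ x * B x + 2 * P x * (2 * P x * B x))))) / 4) x :=
    fun x hx => (((((hP1 x hx).const_mul (-2)).mul (hA x hx)).add
        (((hP x hx).const_mul (-2)).mul (hAd x hx))).add
      ((((hP1 x hx).const_mul 2).mul (hB x hx)).add
        (((hP x hx).const_mul 2).mul (hBd x hx)))).div_const 4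
  have E3 := deriv_eq_on I hI hQ2 hR3 E2
  intro x hx
  rw [E3 x hx, E1 x hx, hbc x hx]
  ring

lemma hasDerivAt_im_of_complex {f : ℂ → ℂ} {f' : ℂ} {t : ℝ}
    (hf : HasDerivAt f f' ↑t) : HasDerivAt (fun s : ℝ => (f ↑s).im) f'.im t := by
  have h := (hf.const_mul (-Complex.I)).real_of_complex
  have h2 : (fun s : ℝ => (-Complex.I * f ↑s).re) = fun s : ℝ => (f ↑s).im := by
    funext s; simp
  rw [h2] at h
  convert h using 1
  simp

/-- Theorem 9.4 for `n = 1`: if `ω` is harmonic and the integrable boundary condition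
`2ω_y(x,0) = −αe^{−ω(x,0)} − βe^{ω(x,0)}` holds along `y = 0`, then the conformal Jacobi
field `h₁ = Re(η'' − 2η³)`, with `η = (ω_x − iω_y)/2` holomorphic, satisfies the Robin
condition `2∂_y h₁(x,0) = (αe^{−ω(x,0)} − βe^{ω(x,0)}) h₁(x,0)`. -/
theorem mkdv_jacobi_field_robin_condition
    (U : Set ℂ) (hU : IsOpen U)
    (I : Set ℝ) (hIopen : IsOpen I) (hIconn : I.OrdConnected)
    (hIU : ∀ x ∈ I, (x : ℂ) ∈ U)
    (ω : ℂ → ℝ) (hsmooth : ContDiffOn ℝ (⊤ : ℕ∞) ω U)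
    (ωx ωy ωxx ωyy : ℂ → ℝ)
    (hωx : ∀ z ∈ U, HasDerivAt (fun t : ℝ => ω (z + t)) (ωx z) 0)
    (hωy : ∀ z ∈ U, HasDerivAt (fun t : ℝ => ω (z + t * Complex.I)) (ωy z) 0)
    (hωxx : ∀ z ∈ U, HasDerivAt (fun t : ℝ => ωx (z + t)) (ωxx z) 0)
    (hωyy : ∀ z ∈ U, HasDerivAt (fun t : ℝ => ωy (z + t * Complex.I)) (ωyy z) 0)
    (hharm : ∀ z ∈ U, ωxx z + ωyy z = 0)
    (η η' η'' : ℂ → ℂ)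
    (hηdef : ∀ z ∈ U, η z = ((ωx z : ℂ) - Complex.I * (ωy z : ℂ)) / 2)
    (hηhol : ∀ z ∈ U, HasDerivAt η (η' z) z)
    (hη'hol : ∀ z ∈ U, HasDerivAt η' (η'' z) z)
    (α β : ℝ)
    (hcap : ∀ x ∈ I,
      2 * ωy (x : ℂ) = -α * Real.exp (-ω (x : ℂ)) - β * Real.exp (ω (x : ℂ)))
    (h₁y : ℝ → ℝ)
    (hh₁y : ∀ x ∈ I, HasDerivAt
      (fun y : ℝ => (η'' ((x : ℂ) + (y : ℂ) * Complex.I)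
        - 2 * (η ((x : ℂ) + (y : ℂ) * Complex.I)) ^ 3).re)
      (h₁y x) 0) :
    ∀ x ∈ I,
      2 * h₁y x
        = (α * Real.exp (-ω (x : ℂ)) - β * Real.exp (ω (x : ℂ)))
          * (η'' (x : ℂ) - 2 * (η (x : ℂ)) ^ 3).re := by
  -- the third derivative of η
  have hη''diff : ∀ z ∈ U, DifferentiableAt ℂ η'' z := by
    intro z hz
    have h1 : DifferentiableOn ℂ η' U :=
      fun w hw => (hη'hol w hw).differentiableAt.differentiableWithinAt
    have h2 : AnalyticOnNhd ℂ (deriv η') U := (h1.analyticOnNhd hU).deriv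
    have h3 : η'' =ᶠ[nhds z] deriv η' := by
      filter_upwards [hU.mem_nhds hz] with w hw
      exact ((hη'hol w hw).deriv).symm
    exact ((h2 z hz).differentiableAt).congr_of_eventuallyEq h3
  have hη''hol : ∀ z ∈ U, HasDerivAt η'' (deriv η'' z) z :=
    fun z hz => (hη''diff z hz).hasDerivAt
  -- real and imaginary parts of η on the axis
  have hηre : ∀ t : ℝ, (t:ℂ) ∈ U → (η ↑t).re = ωx ↑t / 2 ∧ (η ↑t).im = -(ωy ↑t) / 2 := by
    intro t tU
    rw [hηdef _ tU]
    constructor <;> simp <;> ring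
  -- derivative of ω along the real axis
  have hu : ∀ t : ℝ, (t:ℂ) ∈ U → HasDerivAt (fun s : ℝ => ω ↑s) (ωx ↑t) t := by
    intro t tU
    have hsub : HasDerivAt (fun s : ℝ => s - t) 1 t := (hasDerivAt_id t).sub_const t
    have h2 := (hωx _ tU).comp_of_eq t hsub (by simp)
    have h3 : ((fun s : ℝ => ω ((t:ℂ) + s)) ∘ fun s => s - t) = fun s : ℝ => ω s := by
      funext s; simp only [Function.comp]; congr 1; push_cast; ring
    rw [h3] at h2
    simpa using h2
  -- set up the real functions
  set A : ℝ → ℝ := fun t => α * Real.exp (-ω ↑t) with hAdef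
  set B : ℝ → ℝ := fun t => β * Real.exp (ω ↑t) with hBdef
  set P : ℝ → ℝ := fun t => (η ↑t).re with hPdef
  set Q : ℝ → ℝ := fun t => (η ↑t).im with hQdef
  set P₁ : ℝ → ℝ := fun t => (η' ↑t).re with hP1def
  set Q₁ : ℝ → ℝ := fun t => (η' ↑t).im with hQ1def
  set P₂ : ℝ → ℝ := fun t => (η'' ↑t).re with hP2def
  set Q₂ : ℝ → ℝ := fun t => (η'' ↑t).im with hQ2def
  set Q₃ : ℝ → ℝ := fun t => (deriv η'' ↑t).im with hQ3def
  have hA : ∀ x ∈ I, HasDerivAt A (-2 * P x * A x) x := by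
    intro x hx
    have h := (((hu x (hIU x hx)).neg).exp).const_mul α
    refine h.congr_deriv ?_
    simp only [hPdef, hAdef, Pi.neg_apply]
    rw [(hηre x (hIU x hx)).1]
    ring
  have hB : ∀ x ∈ I, HasDerivAt B (2 * P x * B x) x := by
    intro x hx
    have h := ((hu x (hIU x hx)).exp).const_mul β
    refine h.congr_deriv ?_
    simp only [hPdef, hBdef]
    rw [(hηre x (hIU x hx)).1]
    ring
  have hP : ∀ x ∈ I, HasDerivAt P (P₁ x) x :=
    fun x hx => (hηhol _ (hIU x hx)).real_of_complex
  have hQ : ∀ x ∈ I, HasDerivAt Q (Q₁ x) x :=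
    fun x hx => hasDerivAt_im_of_complex (hηhol _ (hIU x hx))
  have hP1 : ∀ x ∈ I, HasDerivAt P₁ (P₂ x) x :=
    fun x hx => (hη'hol _ (hIU x hx)).real_of_complex
  have hQ1 : ∀ x ∈ I, HasDerivAt Q₁ (Q₂ x) x :=
    fun x hx => hasDerivAt_im_of_complex (hη'hol _ (hIU x hx))
  have hQ2 : ∀ x ∈ I, HasDerivAt Q₂ (Q₃ x) x :=
    fun x hx => hasDerivAt_im_of_complex (hη''hol _ (hIU x hx))
  have hbc : ∀ x ∈ I, Q x = (A x + B x) / 4 := by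
    intro x hx
    have h1 := (hηre x (hIU x hx)).2
    have h2 := hcap x hx
    simp only [hQdef, hAdef, hBdef] at *
    rw [h1]
    linarith
  have hkey := mkdv_key I hIopen A B P Q P₁ Q₁ P₂ Q₂ Q₃ hA hB hP hP1 hQ hQ1 hQ2 hbc
  intro x hx
  have hxU : (x:ℂ) ∈ U := hIU x hx
  -- vertical derivative of the Jacobi field
  set D : ℂ := deriv η'' ↑x - 6 * η ↑x ^ 2 * η' ↑x with hDdef
  have hF : HasDerivAt (fun z => η'' z - 2 * η z ^ 3) D ↑x := by
    have h := (hη''hol _ hxU).sub (((hηhol _ hxU).pow 3).const_mul 2)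
    refine h.congr_deriv ?_
    rw [hDdef]
    push_cast
    ring
  have hline : HasDerivAt (fun y : ℝ => ((x:ℂ) + (y:ℂ) * Complex.I)) Complex.I 0 := by
    simpa using ((Complex.ofRealCLM.hasDerivAt (x := (0:ℝ))).mul_const Complex.I).const_add (x:ℂ)
  have hF0 : HasDerivAt (fun z => η'' z - 2 * η z ^ 3) D ((x:ℂ) + ((0:ℝ):ℂ) * Complex.I) := by
    rw [show ((x:ℂ) + ((0:ℝ):ℂ) * Complex.I) = (x:ℂ) by simp]
    exact hF
  have hv : HasDerivAt (fun y : ℝ => η'' ((x:ℂ) + (y:ℂ) * Complex.I)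
      - 2 * η ((x:ℂ) + (y:ℂ) * Complex.I) ^ 3) (Complex.I • D) 0 :=
    HasDerivAt.scomp 0 hF0 hline
  have hvre : HasDerivAt (fun y : ℝ => (η'' ((x:ℂ) + (y:ℂ) * Complex.I)
      - 2 * η ((x:ℂ) + (y:ℂ) * Complex.I) ^ 3).re) ((Complex.I • D).re) 0 := by
    simpa only [Function.comp_def, Complex.reCLM_apply] using Complex.reCLM.hasFDerivAt.comp_hasDerivAt 0 hv
  have huniq : h₁y x = (Complex.I • D).re := (hh₁y x hx).unique hvre
  have hL : (Complex.I • D).re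
      = -(Q₃ x - 6 * ((P x ^ 2 - Q x ^ 2) * Q₁ x + 2 * P x * Q x * P₁ x)) := by
    simp only [hDdef, hQ3def, hPdef, hQdef, hP1def, hQ1def, smul_eq_mul, Complex.mul_re,
      Complex.I_re, Complex.I_im, Complex.sub_re, Complex.sub_im, Complex.mul_im, pow_two,
      Complex.re_ofNat, Complex.im_ofNat]
    ring
  have hRe : (η'' (x:ℂ) - 2 * (η (x:ℂ)) ^ 3).re
      = P₂ x - 2 * (P x ^ 3 - 3 * P x * Q x ^ 2) := by
    simp only [hP2def, hPdef, hQdef, Complex.sub_re, Complex.mul_re, Complex.mul_im,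
      pow_succ, pow_zero, one_mul, Complex.re_ofNat, Complex.im_ofNat]
    ring
  rw [huniq, hL, hRe]
  exact hkey x hx
end

section
/- Let 𝒱 = (s₁,s₂)×(t₁,t₂) ⊆ ℝ², let ω : 𝒱 → ℝ be harmonic (smooth with ω_xx + ω_yy = 0 on 𝒱), and suppose there exist real analytic functions α, β : (s₁,s₂) → ℝ such that 2ω_x(x,y) = −α(x)·e^{−ω(x,y)} − β(x)·e^{ω(x,y)} for all (x,y) ∈ 𝒱 (i.e. ω is foliated by capillary curves). Then there exists a constant c₀ ∈ ℝ such that 2ω_yyy + 3ω_x²·ω_y − ω_y³ = −2c₀·ω_y at every point of 𝒱. -/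
open Set

private lemma const_of_hasDerivAt_zero_Ioo' {f : ℝ → ℝ} {a b u w : ℝ}
    (hf : ∀ t ∈ Ioo a b, HasDerivAt f 0 t)
    (hu : u ∈ Ioo a b) (hw : w ∈ Ioo a b) (huw : u ≤ w) : f w = f u := by
  have hsub : Icc u w ⊆ Ioo a b := fun z hz => ⟨lt_of_lt_of_le hu.1 hz.1, lt_of_le_of_lt hz.2 hw.2⟩
  have hcont : ContinuousOn f (Icc u w) := fun z hz =>
    ((hf z (hsub hz)).continuousAt).continuousWithinAt
  have hderiv : ∀ z ∈ Ico u w, HasDerivWithinAt f 0 (Ici z) z := fun z hz =>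
    ((hf z (hsub ⟨hz.1, le_of_lt hz.2⟩)).hasDerivWithinAt)
  exact constant_of_has_deriv_right_zero hcont hderiv w ⟨huw, le_rfl⟩

private lemma const_of_hasDerivAt_zero_Ioo {f : ℝ → ℝ} {a b u w : ℝ}
    (hf : ∀ t ∈ Ioo a b, HasDerivAt f 0 t)
    (hu : u ∈ Ioo a b) (hw : w ∈ Ioo a b) : f u = f w := by
  rcases le_total u w with h | h
  · exact (const_of_hasDerivAt_zero_Ioo' hf hu hw h).symm
  · exact const_of_hasDerivAt_zero_Ioo' hf hw hu h

private lemma ode_zero {A B t₀ t₁ : ℝ} {f m : ℝ → ℝ}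
    (hf : ∀ t ∈ Ioo A B, HasDerivAt f (m t * f t) t)
    (hm : ContinuousOn m (Ioo A B))
    (ht₀ : t₀ ∈ Ioo A B) (ht₁ : t₁ ∈ Ioo A B) (h0 : f t₀ = 0) : f t₁ = 0 := by
  set c := min t₀ t₁ with hc
  set d := max t₀ t₁ with hd
  set a' := (A + c) / 2 with ha'
  set b' := (d + B) / 2 with hb'
  have hcI : c ∈ Ioo A B := by
    rcases le_total t₀ t₁ with h | h
    · simpa [hc, min_eq_left h] using ht₀
    · simpa [hc, min_eq_right h] using ht₁
  have hdI : d ∈ Ioo A B := by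
    rcases le_total t₀ t₁ with h | h
    · simpa [hd, max_eq_right h] using ht₁
    · simpa [hd, max_eq_left h] using ht₀
  have ha'c : a' < c := by
    have := hcI.1; rw [ha']; linarith
  have hAa' : A < a' := by have := hcI.1; rw [ha']; linarith
  have hdb' : d < b' := by have := hdI.2; rw [hb']; linarith
  have hb'B : b' < B := by have := hdI.2; rw [hb']; linarith
  have hsub : Icc a' b' ⊆ Ioo A B := fun z hz => ⟨lt_of_lt_of_le hAa' hz.1, lt_of_le_of_lt hz.2 hb'B⟩
  have ht₀' : t₀ ∈ Ioo a' b' :=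
    ⟨lt_of_lt_of_le ha'c (min_le_left _ _), lt_of_le_of_lt (le_max_left _ _) hdb'⟩
  have ht₁' : t₁ ∈ Ioo a' b' :=
    ⟨lt_of_lt_of_le ha'c (min_le_right _ _), lt_of_le_of_lt (le_max_right _ _) hdb'⟩
  obtain ⟨K, hK⟩ := (isCompact_Icc (a := a') (b := b')).exists_bound_of_continuousOn
    (hm.mono hsub)
  set K' : ℝ := max K 0 with hK'
  have hK'0 : 0 ≤ K' := le_max_right _ _
  have hKm : ∀ z ∈ Icc a' b', |m z| ≤ K' := fun z hz =>
    le_trans (by simpa [Real.norm_eq_abs] using hK z hz) (le_max_left _ _)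
  set v : ℝ → ℝ → ℝ := fun t x => max (-K') (min K' (m t)) * x with hv
  have hclip : ∀ t, |max (-K') (min K' (m t))| ≤ K' := by
    intro t
    rw [abs_le]
    constructor
    · exact le_max_left _ _
    · exact max_le (by linarith) (min_le_left _ _)
  have hveq : ∀ t ∈ Icc a' b', ∀ x, v t x = m t * x := by
    intro t ht x
    have h1 := (abs_le.mp (hKm t ht)).1
    have h2 := (abs_le.mp (hKm t ht)).2
    have : max (-K') (min K' (m t)) = m t := by
      rw [min_eq_right h2, max_eq_right h1]
    rw [hv]; simp only [this]
  have hlip : ∀ t, LipschitzOnWith K'.toNNReal (v t) univ := by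
    intro t
    apply LipschitzWith.lipschitzOnWith
    apply LipschitzWith.of_dist_le_mul
    intro x y
    simp only [hv, Real.dist_eq, ← mul_sub, abs_mul]
    rw [Real.coe_toNNReal _ hK'0]
    exact mul_le_mul_of_nonneg_right (hclip t) (abs_nonneg _)
  have key : EqOn f (fun _ => (0 : ℝ)) (Icc a' b') := by
    apply ODE_solution_unique_of_mem_Icc (v := v) (s := fun _ => univ) (fun t _ => hlip t)
      (ht := ht₀')
    · exact fun z hz => ((hf z (hsub hz)).continuousAt).continuousWithinAt
    · intro t ht
      have := hf t (hsub (Ioo_subset_Icc_self ht))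
      rwa [hveq t (Ioo_subset_Icc_self ht)]
    · exact fun _ _ => mem_univ _
    · exact continuousOn_const
    · intro t ht
      have : v t 0 = 0 := by simp [hv]
      simpa [this] using hasDerivAt_const t (0 : ℝ)
    · exact fun _ _ => mem_univ _
    · exact h0
  exact key ⟨le_of_lt ht₁'.1, le_of_lt ht₁'.2⟩

private lemma HasDerivAt.congr_d {f : ℝ → ℝ} {a b x : ℝ}
    (h : HasDerivAt f a x) (hab : a = b) : HasDerivAt f b x := hab ▸ h

/-- The conserved quantity `G = ω_y² + α'e^{-ω} - β'e^{ω} + (α²e^{-2ω}+β²e^{2ω})/4 - (3/2)αβ`. -/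
noncomputable def auxG (α β : ℝ → ℝ) (ω ωy : ℝ × ℝ → ℝ) (x y : ℝ) : ℝ :=
  ωy (x, y) ^ 2 + deriv α x * Real.exp (-ω (x, y)) - deriv β x * Real.exp (ω (x, y))
    + ((α x) ^ 2 * Real.exp (-ω (x, y)) ^ 2 + (β x) ^ 2 * Real.exp (ω (x, y)) ^ 2) / 4
    - 3 / 2 * (α x * β x)

/-- The `x`-derivative of `auxG`. -/
noncomputable def auxPhi (α β : ℝ → ℝ) (ω ωx ωy : ℝ × ℝ → ℝ) (x y : ℝ) : ℝ :=
  ωy (x, y) ^ 2 * (α x * Real.exp (-ω (x, y)) - β x * Real.exp (ω (x, y)))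
    + deriv (deriv α) x * Real.exp (-ω (x, y)) - deriv (deriv β) x * Real.exp (ω (x, y))
    - ωx (x, y) * (deriv α x * Real.exp (-ω (x, y)) + deriv β x * Real.exp (ω (x, y)))
    + (α x * deriv α x * Real.exp (-ω (x, y)) ^ 2 + β x * deriv β x * Real.exp (ω (x, y)) ^ 2) / 2
    - ωx (x, y) * ((α x) ^ 2 * Real.exp (-ω (x, y)) ^ 2 - (β x) ^ 2 * Real.exp (ω (x, y)) ^ 2) / 2
    - 3 / 2 * (deriv α x * β x + α x * deriv β x)

/-- Theorem 9.8 (forward direction): a harmonic `ω` on a rectangle that is foliated by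
capillary curves, i.e. `2ω_x = −α(x)e^{−ω} − β(x)e^{ω}` with `α, β` real analytic,
has spectral genus at most `1`: there is `c₀ ∈ ℝ` with
`2ω_yyy + 3ω_x²ω_y − ω_y³ = −2c₀ω_y` on the rectangle. -/
theorem foliation_implies_genus_one
    (s₁ s₂ t₁ t₂ : ℝ) (V : Set (ℝ × ℝ))
    (hV : V = Ioo s₁ s₂ ×ˢ Ioo t₁ t₂)
    (ω ωx ωy ωxx ωyy ωyyy : ℝ × ℝ → ℝ)
    (hsmooth : ContDiffOn ℝ (⊤ : ℕ∞) ω V)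
    (hωx : ∀ p ∈ V, HasDerivAt (fun s => ω (s, p.2)) (ωx p) p.1)
    (hωy : ∀ p ∈ V, HasDerivAt (fun t => ω (p.1, t)) (ωy p) p.2)
    (hωxx : ∀ p ∈ V, HasDerivAt (fun s => ωx (s, p.2)) (ωxx p) p.1)
    (hωyy : ∀ p ∈ V, HasDerivAt (fun t => ωy (p.1, t)) (ωyy p) p.2)
    (hωyyy : ∀ p ∈ V, HasDerivAt (fun t => ωyy (p.1, t)) (ωyyy p) p.2)
    (hharm : ∀ p ∈ V, ωxx p + ωyy p = 0)
    (α β : ℝ → ℝ)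
    (hαanal : AnalyticOnNhd ℝ α (Ioo s₁ s₂))
    (hβanal : AnalyticOnNhd ℝ β (Ioo s₁ s₂))
    (hfol : ∀ p ∈ V, 2 * ωx p = -α p.1 * Real.exp (-ω p) - β p.1 * Real.exp (ω p)) :
    ∃ c₀ : ℝ, ∀ p ∈ V,
      2 * ωyyy p + 3 * (ωx p) ^ 2 * ωy p - (ωy p) ^ 3 = -2 * c₀ * ωy p := by
  subst hV
  have hWo : IsOpen (Ioo s₁ s₂ ×ˢ Ioo t₁ t₂) := isOpen_Ioo.prod isOpen_Ioo
  have hmk : ∀ {x y : ℝ}, x ∈ Ioo s₁ s₂ → y ∈ Ioo t₁ t₂ →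
      (x, y) ∈ Ioo s₁ s₂ ×ˢ Ioo t₁ t₂ := fun hx hy => mem_prod.mpr ⟨hx, hy⟩
  have hEF : ∀ x y : ℝ, Real.exp (ω (x, y)) * Real.exp (-ω (x, y)) = 1 := by
    intro x y; rw [← Real.exp_add]; simp
  -- derivatives of α and β
  have hαd : ∀ x ∈ Ioo s₁ s₂, HasDerivAt α (deriv α x) x := fun x hx =>
    (hαanal x hx).differentiableAt.hasDerivAt
  have hβd : ∀ x ∈ Ioo s₁ s₂, HasDerivAt β (deriv β x) x := fun x hx =>
    (hβanal x hx).differentiableAt.hasDerivAt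
  have hα1d : ∀ x ∈ Ioo s₁ s₂, HasDerivAt (deriv α) (deriv (deriv α) x) x := fun x hx =>
    ((hαanal.deriv) x hx).differentiableAt.hasDerivAt
  have hβ1d : ∀ x ∈ Ioo s₁ s₂, HasDerivAt (deriv β) (deriv (deriv β) x) x := fun x hx =>
    ((hβanal.deriv) x hx).differentiableAt.hasDerivAt
  -- vertical derivatives of exp(±ω)
  have hEy : ∀ {x y : ℝ} (hx : x ∈ Ioo s₁ s₂) (hy : y ∈ Ioo t₁ t₂),
      HasDerivAt (fun t => Real.exp (ω (x, t))) (Real.exp (ω (x, y)) * ωy (x, y)) y :=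
    fun {x y} hx hy => (hωy (x, y) (hmk hx hy)).exp
  have hFy : ∀ {x y : ℝ} (hx : x ∈ Ioo s₁ s₂) (hy : y ∈ Ioo t₁ t₂),
      HasDerivAt (fun t => Real.exp (-ω (x, t))) (Real.exp (-ω (x, y)) * -ωy (x, y)) y :=
    fun {x y} hx hy => ((hωy (x, y) (hmk hx hy)).neg).exp
  -- horizontal derivatives of exp(±ω)
  have hEx : ∀ {x y : ℝ} (hx : x ∈ Ioo s₁ s₂) (hy : y ∈ Ioo t₁ t₂),
      HasDerivAt (fun s => Real.exp (ω (s, y))) (Real.exp (ω (x, y)) * ωx (x, y)) x :=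
    fun {x y} hx hy => (hωx (x, y) (hmk hx hy)).exp
  have hFx : ∀ {x y : ℝ} (hx : x ∈ Ioo s₁ s₂) (hy : y ∈ Ioo t₁ t₂),
      HasDerivAt (fun s => Real.exp (-ω (s, y))) (Real.exp (-ω (x, y)) * -ωx (x, y)) x :=
    fun {x y} hx hy => ((hωx (x, y) (hmk hx hy)).neg).exp
  -- S2 : vertical derivative of ωx
  have hωxyD : ∀ {x y : ℝ} (hx : x ∈ Ioo s₁ s₂) (hy : y ∈ Ioo t₁ t₂),
      HasDerivAt (fun t => ωx (x, t))
        ((α x * Real.exp (-ω (x, y)) - β x * Real.exp (ω (x, y))) / 2 * ωy (x, y)) y := by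
    intro x y hx hy
    have hfun : (fun t => (-α x * Real.exp (-ω (x, t)) - β x * Real.exp (ω (x, t))) / 2)
        =ᶠ[nhds y] (fun t => ωx (x, t)) := by
      filter_upwards [isOpen_Ioo.mem_nhds hy] with t ht
      have := hfol (x, t) (hmk hx ht); linarith
    have hraw := ((((hFy hx hy).const_mul (-α x)).sub ((hEy hx hy).const_mul (β x))).div_const 2)
    exact (hraw.congr_d (by ring)).congr_of_eventuallyEq hfun.symm
  -- S3 : value of ωxx
  have hωxxval : ∀ {x y : ℝ} (hx : x ∈ Ioo s₁ s₂) (hy : y ∈ Ioo t₁ t₂),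
      ωxx (x, y) = (-(deriv α x * Real.exp (-ω (x, y))) - deriv β x * Real.exp (ω (x, y))
        + (α x * Real.exp (-ω (x, y)) - β x * Real.exp (ω (x, y))) * ωx (x, y)) / 2 := by
    intro x y hx hy
    have hfun : (fun s => (-α s * Real.exp (-ω (s, y)) - β s * Real.exp (ω (s, y))) / 2)
        =ᶠ[nhds x] (fun s => ωx (s, y)) := by
      filter_upwards [isOpen_Ioo.mem_nhds hx] with s hs
      have := hfol (s, y) (hmk hs hy); linarith
    have hraw := (((((hαd x hx).neg).mul (hFx hx hy)).sub ((hβd x hx).mul (hEx hx hy))).div_const 2)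
    have hD := hraw.congr_of_eventuallyEq hfun.symm
    have := (hωxx (x, y) (hmk hx hy)).unique hD
    rw [this]; simp only [Pi.neg_apply, Pi.sub_apply]; ring
  -- S4 : value of ωyy
  have hωyyval : ∀ {x y : ℝ} (hx : x ∈ Ioo s₁ s₂) (hy : y ∈ Ioo t₁ t₂),
      ωyy (x, y) = (deriv α x * Real.exp (-ω (x, y)) + deriv β x * Real.exp (ω (x, y))
        - (α x * Real.exp (-ω (x, y)) - β x * Real.exp (ω (x, y))) * ωx (x, y)) / 2 := by
    intro x y hx hy
    have h1 := hharm (x, y) (hmk hx hy)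
    have h2 := hωxxval hx hy
    linarith
  -- S5 : value of ωyyy
  have hωyyyval : ∀ {x y : ℝ} (hx : x ∈ Ioo s₁ s₂) (hy : y ∈ Ioo t₁ t₂),
      ωyyy (x, y) = (-(deriv α x * Real.exp (-ω (x, y)) * ωy (x, y))
        + deriv β x * Real.exp (ω (x, y)) * ωy (x, y)
        + (α x * Real.exp (-ω (x, y)) + β x * Real.exp (ω (x, y))) * ωx (x, y) * ωy (x, y)
        - (α x * Real.exp (-ω (x, y)) - β x * Real.exp (ω (x, y))) ^ 2 * ωy (x, y) / 2) / 2 := by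
    intro x y hx hy
    have hfun : (fun t => (deriv α x * Real.exp (-ω (x, t)) + deriv β x * Real.exp (ω (x, t))
        - (α x * Real.exp (-ω (x, t)) - β x * Real.exp (ω (x, t))) * ωx (x, t)) / 2)
        =ᶠ[nhds y] (fun t => ωyy (x, t)) := by
      filter_upwards [isOpen_Ioo.mem_nhds hy] with t ht
      exact (hωyyval hx ht).symm
    have hraw := (((((hFy hx hy).const_mul (deriv α x)).add ((hEy hx hy).const_mul (deriv β x))).sub
      ((((hFy hx hy).const_mul (α x)).sub ((hEy hx hy).const_mul (β x))).mul
        (hωxyD hx hy))).div_const 2)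
    have hD := hraw.congr_of_eventuallyEq hfun.symm
    have := (hωyyy (x, y) (hmk hx hy)).unique hD
    rw [this]; simp only [Pi.neg_apply, Pi.sub_apply]; ring
  -- key pointwise identity : LHS = -G·ωy
  have key1 : ∀ {x y : ℝ} (hx : x ∈ Ioo s₁ s₂) (hy : y ∈ Ioo t₁ t₂),
      2 * ωyyy (x, y) + 3 * (ωx (x, y)) ^ 2 * ωy (x, y) - (ωy (x, y)) ^ 3
        = -(auxG α β ω ωy x y) * ωy (x, y) := by
    intro x y hx hy
    have h2X := hfol (x, y) (hmk hx hy)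
    have hY3 := hωyyyval hx hy
    have hef := hEF x y
    simp only [auxG]
    linear_combination (2 : ℝ) * hY3
      + (3 * ωy (x, y) * ωx (x, y) / 2
         - ωy (x, y) * Real.exp (-ω (x, y)) * α x / 4
         - ωy (x, y) * Real.exp (ω (x, y)) * β x / 4) * h2X
      + (3 * ωy (x, y) * α x * β x / 2) * hef
  -- S7 : G is constant in y
  have hGyD : ∀ {x y : ℝ} (hx : x ∈ Ioo s₁ s₂) (hy : y ∈ Ioo t₁ t₂),
      HasDerivAt (fun t => auxG α β ω ωy x t) 0 y := by
    intro x y hx hy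
    have hvt : HasDerivAt (fun t => ωy (x, t)) (ωyy (x, y)) y := hωyy (x, y) (hmk hx hy)
    have hraw := (((((hvt.pow 2).add ((hFy hx hy).const_mul (deriv α x))).sub
        ((hEy hx hy).const_mul (deriv β x))).add
        (((((hFy hx hy).pow 2).const_mul ((α x) ^ 2)).add
          (((hEy hx hy).pow 2).const_mul ((β x) ^ 2))).div_const 4)).sub
        (hasDerivAt_const y (3 / 2 * (α x * β x))))
    have hYY := hωyyval hx hy
    have h2X := hfol (x, y) (hmk hx hy)
    simp only [auxG]
    refine hraw.congr_d ?_
    push_cast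
    linear_combination (2 * ωy (x, y)) * hYY
      + (-(ωy (x, y) * Real.exp (-ω (x, y)) * α x) / 2
         + ωy (x, y) * Real.exp (ω (x, y)) * β x / 2) * h2X
  have hGconst : ∀ {x y y' : ℝ}, x ∈ Ioo s₁ s₂ → y ∈ Ioo t₁ t₂ → y' ∈ Ioo t₁ t₂ →
      auxG α β ω ωy x y = auxG α β ω ωy x y' := by
    intro x y y' hx hy hy'
    exact const_of_hasDerivAt_zero_Ioo (fun t ht => hGyD hx ht) hy hy'
  have hdiffV : ∀ q ∈ Ioo s₁ s₂ ×ˢ Ioo t₁ t₂, HasFDerivAt ω (fderiv ℝ ω q) q := fun q hq =>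
    ((hsmooth.contDiffAt (hWo.mem_nhds hq)).differentiableAt (by simp)).hasFDerivAt
  have hprojy : ∀ q ∈ Ioo s₁ s₂ ×ˢ Ioo t₁ t₂, ωy q = fderiv ℝ ω q (0, 1) := by
    intro q hq
    have hγ : HasDerivAt (fun t => (q.1, t)) (((0 : ℝ), (1 : ℝ))) q.2 :=
      (hasDerivAt_const _ _).prodMk (hasDerivAt_id _)
    exact (hωy q hq).unique ((hdiffV q hq).comp_hasDerivAt q.2 hγ)
  have hprojx : ∀ q ∈ Ioo s₁ s₂ ×ˢ Ioo t₁ t₂, ωx q = fderiv ℝ ω q (1, 0) := by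
    intro q hq
    have hγ : HasDerivAt (fun s => (s, q.2)) (((1 : ℝ), (0 : ℝ))) q.1 :=
      (hasDerivAt_id _).prodMk (hasDerivAt_const _ _)
    exact (hωx q hq).unique ((hdiffV q hq).comp_hasDerivAt q.1 hγ)
  -- S8 : Schwarz symmetry : horizontal derivative of ωy
  have hωyxD : ∀ {x y : ℝ} (hx : x ∈ Ioo s₁ s₂) (hy : y ∈ Ioo t₁ t₂),
      HasDerivAt (fun s => ωy (s, y))
        ((α x * Real.exp (-ω (x, y)) - β x * Real.exp (ω (x, y))) / 2 * ωy (x, y)) x := by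
    intro x y hx hy
    have hpV : (x, y) ∈ Ioo s₁ s₂ ×ˢ Ioo t₁ t₂ := hmk hx hy
    have hEv : ∀ᶠ q in nhds (x, y), HasFDerivAt ω (fderiv ℝ ω q) q := by
      filter_upwards [hWo.mem_nhds hpV] with q hq
      exact hdiffV q hq
    have hCD : ContDiffAt ℝ (⊤ : ℕ∞) ω (x, y) := hsmooth.contDiffAt (hWo.mem_nhds hpV)
    have hCD1 : ContDiffAt ℝ 1 (fderiv ℝ ω) (x, y) := hCD.fderiv_right (WithTop.coe_le_coe.mpr le_top)
    have hsnd : HasFDerivAt (fderiv ℝ ω) (fderiv ℝ (fderiv ℝ ω) (x, y)) (x, y) :=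
      (hCD1.differentiableAt one_ne_zero).hasFDerivAt
    have hsymm := second_derivative_symmetric_of_eventually hEv hsnd
    -- horizontal derivative of s ↦ fderiv ω (s,y) (0,1)
    have hδ : HasDerivAt (fun s => ((s, y) : ℝ × ℝ)) (((1 : ℝ), (0 : ℝ))) x :=
      (hasDerivAt_id _).prodMk (hasDerivAt_const _ _)
    have hc : HasDerivAt (fun s => fderiv ℝ ω (s, y)) (fderiv ℝ (fderiv ℝ ω) (x, y) (1, 0)) x :=
      hsnd.comp_hasDerivAt x hδ
    have happ : HasDerivAt (fun s => fderiv ℝ ω (s, y) (0, 1))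
        (fderiv ℝ (fderiv ℝ ω) (x, y) (1, 0) (0, 1)) x := by
      have := hc.clm_apply (hasDerivAt_const x (((0 : ℝ), (1 : ℝ))))
      simpa using this
    have hfun : (fun s => fderiv ℝ ω (s, y) (0, 1)) =ᶠ[nhds x] (fun s => ωy (s, y)) := by
      filter_upwards [isOpen_Ioo.mem_nhds hx] with s hs
      exact (hprojy (s, y) (hmk hs hy)).symm
    have hyD : HasDerivAt (fun s => ωy (s, y))
        (fderiv ℝ (fderiv ℝ ω) (x, y) (1, 0) (0, 1)) x := happ.congr_of_eventuallyEq hfun.symm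
    -- vertical derivative of t ↦ fderiv ω (x,t) (1,0)
    have hδ' : HasDerivAt (fun t => ((x, t) : ℝ × ℝ)) (((0 : ℝ), (1 : ℝ))) y :=
      (hasDerivAt_const _ _).prodMk (hasDerivAt_id _)
    have hc' : HasDerivAt (fun t => fderiv ℝ ω (x, t)) (fderiv ℝ (fderiv ℝ ω) (x, y) (0, 1)) y :=
      hsnd.comp_hasDerivAt y hδ'
    have happ' : HasDerivAt (fun t => fderiv ℝ ω (x, t) (1, 0))
        (fderiv ℝ (fderiv ℝ ω) (x, y) (0, 1) (1, 0)) y := by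
      have := hc'.clm_apply (hasDerivAt_const y (((1 : ℝ), (0 : ℝ))))
      simpa using this
    have hfun' : (fun t => fderiv ℝ ω (x, t) (1, 0)) =ᶠ[nhds y] (fun t => ωx (x, t)) := by
      filter_upwards [isOpen_Ioo.mem_nhds hy] with t ht
      exact (hprojx (x, t) (hmk hx ht)).symm
    have hxD : HasDerivAt (fun t => ωx (x, t))
        (fderiv ℝ (fderiv ℝ ω) (x, y) (0, 1) (1, 0)) y := happ'.congr_of_eventuallyEq hfun'.symm
    have hval : fderiv ℝ (fderiv ℝ ω) (x, y) (0, 1) (1, 0)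
        = (α x * Real.exp (-ω (x, y)) - β x * Real.exp (ω (x, y))) / 2 * ωy (x, y) :=
      hxD.unique (hωxyD hx hy)
    have hval2 : fderiv ℝ (fderiv ℝ ω) (x, y) (1, 0) (0, 1)
        = (α x * Real.exp (-ω (x, y)) - β x * Real.exp (ω (x, y))) / 2 * ωy (x, y) := by
      rw [hsymm (1, 0) (0, 1)]; exact hval
    exact hval2 ▸ hyD
  -- S9 : horizontal derivative of G is Φ
  have hGxD : ∀ {x y : ℝ} (hx : x ∈ Ioo s₁ s₂) (hy : y ∈ Ioo t₁ t₂),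
      HasDerivAt (fun s => auxG α β ω ωy s y) (auxPhi α β ω ωx ωy x y) x := by
    intro x y hx hy
    have hraw := (((((hωyxD hx hy).pow 2).add ((hα1d x hx).mul (hFx hx hy))).sub
        ((hβ1d x hx).mul (hEx hx hy))).add
        (((((hαd x hx).pow 2).mul ((hFx hx hy).pow 2)).add
          (((hβd x hx).pow 2).mul ((hEx hx hy).pow 2))).div_const 4)).sub
        (((hαd x hx).mul (hβd x hx)).const_mul (3 / 2))
    simp only [auxG]
    refine hraw.congr_d ?_
    simp only [auxPhi]; simp only [Pi.add_apply, Pi.sub_apply, Pi.mul_apply, Pi.pow_apply, Pi.neg_apply]; push_cast; ring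
  -- S10 : Φ is independent of y
  have hΦconst : ∀ {x y y' : ℝ}, x ∈ Ioo s₁ s₂ → y ∈ Ioo t₁ t₂ → y' ∈ Ioo t₁ t₂ →
      auxPhi α β ω ωx ωy x y = auxPhi α β ω ωx ωy x y' := by
    intro x y y' hx hy hy'
    have h1 := hGxD hx hy
    have h2 := hGxD hx hy'
    have hfun : (fun s => auxG α β ω ωy s y) =ᶠ[nhds x] (fun s => auxG α β ω ωy s y') := by
      filter_upwards [isOpen_Ioo.mem_nhds hx] with s hs
      exact hGconst hs hy hy'
    exact (h1.congr_of_eventuallyEq hfun.symm).unique h2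
  -- S11 : the compatibility identity K = 0
  have hK0 : ∀ {x y : ℝ} (hx : x ∈ Ioo s₁ s₂) (hy : y ∈ Ioo t₁ t₂),
      (2 * ωy (x, y) ^ 1 * ωyy (x, y)) * (α x * Real.exp (-ω (x, y)) - β x * Real.exp (ω (x, y)))
        + ωy (x, y) ^ 2 * (α x * (Real.exp (-ω (x, y)) * -ωy (x, y))
            - β x * (Real.exp (ω (x, y)) * ωy (x, y)))
        + deriv (deriv α) x * (Real.exp (-ω (x, y)) * -ωy (x, y))
        - deriv (deriv β) x * (Real.exp (ω (x, y)) * ωy (x, y))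
        - ((α x * Real.exp (-ω (x, y)) - β x * Real.exp (ω (x, y))) / 2 * ωy (x, y)
              * (deriv α x * Real.exp (-ω (x, y)) + deriv β x * Real.exp (ω (x, y)))
            + ωx (x, y) * (deriv α x * (Real.exp (-ω (x, y)) * -ωy (x, y))
              + deriv β x * (Real.exp (ω (x, y)) * ωy (x, y))))
        + (α x * deriv α x * (2 * Real.exp (-ω (x, y)) ^ 1 * (Real.exp (-ω (x, y)) * -ωy (x, y)))
            + β x * deriv β x * (2 * Real.exp (ω (x, y)) ^ 1
              * (Real.exp (ω (x, y)) * ωy (x, y)))) / 2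
        - ((α x * Real.exp (-ω (x, y)) - β x * Real.exp (ω (x, y))) / 2 * ωy (x, y)
              * ((α x) ^ 2 * Real.exp (-ω (x, y)) ^ 2 - (β x) ^ 2 * Real.exp (ω (x, y)) ^ 2)
            + ωx (x, y) * ((α x) ^ 2 * (2 * Real.exp (-ω (x, y)) ^ 1
                * (Real.exp (-ω (x, y)) * -ωy (x, y)))
              - (β x) ^ 2 * (2 * Real.exp (ω (x, y)) ^ 1
                * (Real.exp (ω (x, y)) * ωy (x, y))))) / 2 = 0 := by
    intro x y hx hy
    have hvt : HasDerivAt (fun t => ωy (x, t)) (ωyy (x, y)) y := hωyy (x, y) (hmk hx hy)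
    have hraw := ((((((hvt.pow 2).mul (((hFy hx hy).const_mul (α x)).sub
          ((hEy hx hy).const_mul (β x)))).add
        ((hFy hx hy).const_mul (deriv (deriv α) x))).sub
        ((hEy hx hy).const_mul (deriv (deriv β) x))).sub
        ((hωxyD hx hy).mul (((hFy hx hy).const_mul (deriv α x)).add
          ((hEy hx hy).const_mul (deriv β x))))).add
        (((((hFy hx hy).pow 2).const_mul (α x * deriv α x)).add
          (((hEy hx hy).pow 2).const_mul (β x * deriv β x))).div_const 2)).sub
        ((((hωxyD hx hy).mul ((((hFy hx hy).pow 2).const_mul ((α x) ^ 2)).sub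
          (((hEy hx hy).pow 2).const_mul ((β x) ^ 2)))).div_const 2))
    have hraw2 := hraw.sub (hasDerivAt_const y (3 / 2 * (deriv α x * β x + α x * deriv β x)))
    have hzero : HasDerivAt (fun t => auxPhi α β ω ωx ωy x t) 0 y := by
      have hfun : (fun _ : ℝ => auxPhi α β ω ωx ωy x y) =ᶠ[nhds y]
          (fun t => auxPhi α β ω ωx ωy x t) := by
        filter_upwards [isOpen_Ioo.mem_nhds hy] with t ht
        exact hΦconst hx hy ht
      exact (hasDerivAt_const y _).congr_of_eventuallyEq hfun.symm
    have hval := hraw2.unique hzero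
    simp only [Pi.add_apply, Pi.sub_apply, Pi.mul_apply, Pi.pow_apply, Pi.neg_apply] at hval
    push_cast at hval ⊢
    linear_combination hval
  -- case split
  by_cases hcase : ∀ p ∈ Ioo s₁ s₂ ×ˢ Ioo t₁ t₂, ωy p = 0
  · refine ⟨0, ?_⟩
    rintro ⟨x, y⟩ hp
    have h := key1 hp.1 hp.2
    rw [hcase (x, y) hp] at h ⊢
    rw [h]; ring
  · push_neg at hcase
    obtain ⟨p₀, hp₀V, hp₀ne⟩ := hcase
    obtain ⟨x₀, y₀⟩ := p₀
    have hx₀ : x₀ ∈ Ioo s₁ s₂ := hp₀V.1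
    have hy₀ : y₀ ∈ Ioo t₁ t₂ := hp₀V.2
    -- ωy never vanishes on the horizontal line y = y₀ (linear ODE)
    have hαc : ContinuousOn α (Ioo s₁ s₂) := fun z hz =>
      ((hαanal z hz).continuousAt).continuousWithinAt
    have hβc : ContinuousOn β (Ioo s₁ s₂) := fun z hz =>
      ((hβanal z hz).continuousAt).continuousWithinAt
    have hωcont : ContinuousOn (fun s => ω (s, y₀)) (Ioo s₁ s₂) :=
      hsmooth.continuousOn.comp
        (Continuous.continuousOn (continuous_id.prodMk continuous_const))
        (fun s hs => hmk hs hy₀)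
    have hmcont : ContinuousOn
        (fun s => (α s * Real.exp (-ω (s, y₀)) - β s * Real.exp (ω (s, y₀))) / 2)
        (Ioo s₁ s₂) :=
      ((hαc.mul (Real.continuous_exp.comp_continuousOn hωcont.neg)).sub
        (hβc.mul (Real.continuous_exp.comp_continuousOn hωcont))).div_const 2
    have hline : ∀ x ∈ Ioo s₁ s₂, ωy (x, y₀) ≠ 0 := by
      intro x hx hzero
      exact hp₀ne (ode_zero (f := fun s => ωy (s, y₀))
        (m := fun s => (α s * Real.exp (-ω (s, y₀)) - β s * Real.exp (ω (s, y₀))) / 2)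
        (fun s hs => hωyxD hs hy₀) hmcont hx hx₀ hzero)
    -- the identity P e^{-ω} + R e^{ω} = 0 where ωy ≠ 0
    have claimPR : ∀ {x y : ℝ}, x ∈ Ioo s₁ s₂ → y ∈ Ioo t₁ t₂ → ωy (x, y) ≠ 0 →
        (deriv (deriv α) x + auxG α β ω ωy x y₀ * α x + 2 * α x ^ 2 * β x)
            * Real.exp (-ω (x, y))
          + (deriv (deriv β) x + auxG α β ω ωy x y₀ * β x + 2 * α x * β x ^ 2)
            * Real.exp (ω (x, y)) = 0 := by
      intro x y hx hy hne
      have hK := hK0 hx hy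
      have hYY := hωyyval hx hy
      have h2X := hfol (x, y) (hmk hx hy)
      have hef := hEF x y
      have hg' : ωy (x, y) ^ 2 + deriv α x * Real.exp (-ω (x, y))
          - deriv β x * Real.exp (ω (x, y))
          + ((α x) ^ 2 * Real.exp (-ω (x, y)) ^ 2 + (β x) ^ 2 * Real.exp (ω (x, y)) ^ 2) / 4
          - 3 / 2 * (α x * β x) = auxG α β ω ωy x y₀ := by
        rw [← hGconst hx hy hy₀]; simp only [auxG]
      have hT : ωy (x, y) *
          ((deriv (deriv α) x + auxG α β ω ωy x y₀ * α x + 2 * α x ^ 2 * β x)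
              * Real.exp (-ω (x, y))
            + (deriv (deriv β) x + auxG α β ω ωy x y₀ * β x + 2 * α x * β x ^ 2)
              * Real.exp (ω (x, y))) = 0 := by
        linear_combination (-1 : ℝ) * hK
          + (2 * ωy (x, y) * Real.exp (-ω (x, y)) * α x
             - 2 * ωy (x, y) * Real.exp (ω (x, y)) * β x) * hYY
          + (ωy (x, y) * Real.exp (-ω (x, y)) * deriv α x / 2
             - ωy (x, y) * Real.exp (ω (x, y)) * deriv β x / 2
             + ωy (x, y) * Real.exp (ω (x, y)) * Real.exp (-ω (x, y)) * α x * β x) * h2X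
          + (-(ωy (x, y) * Real.exp (-ω (x, y)) * α x)
             - ωy (x, y) * Real.exp (ω (x, y)) * β x) * hg'
          + (-(ωy (x, y) * Real.exp (-ω (x, y)) * α x ^ 2 * β x) / 2
             - ωy (x, y) * Real.exp (ω (x, y)) * α x * β x ^ 2 / 2) * hef
      exact (mul_eq_zero.mp hT).resolve_left hne
    -- P = 0 and R = 0
    have hfs : ContinuousOn (fderiv ℝ ω) (Ioo s₁ s₂ ×ˢ Ioo t₁ t₂) :=
      hsmooth.continuousOn_fderiv_of_isOpen hWo (by simp)
    have hPR : ∀ x ∈ Ioo s₁ s₂,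
        (deriv (deriv α) x + auxG α β ω ωy x y₀ * α x + 2 * α x ^ 2 * β x) = 0 ∧
        (deriv (deriv β) x + auxG α β ω ωy x y₀ * β x + 2 * α x * β x ^ 2) = 0 := by
      intro x hx
      set P := deriv (deriv α) x + auxG α β ω ωy x y₀ * α x + 2 * α x ^ 2 * β x with hPdef
      set R := deriv (deriv β) x + auxG α β ω ωy x y₀ * β x + 2 * α x * β x ^ 2 with hRdef
      have hvne : ωy (x, y₀) ≠ 0 := hline x hx
      have h1 := claimPR hx hy₀ hvne
      rw [← hPdef, ← hRdef] at h1
      -- eventual vanishing near y₀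
      have hc1 : ContinuousAt (fderiv ℝ ω) (x, y₀) :=
        hfs.continuousAt (hWo.mem_nhds (hmk hx hy₀))
      have hc2 : ContinuousAt (fun t => fderiv ℝ ω (x, t)) y₀ :=
        hc1.comp ((continuous_const.prodMk continuous_id).continuousAt)
      have hc3 : ContinuousAt (fun t => fderiv ℝ ω (x, t) (0, 1)) y₀ :=
        ((ContinuousLinearMap.apply ℝ ℝ (((0 : ℝ), (1 : ℝ)))).continuous.continuousAt).comp hc2
      have hne0 : fderiv ℝ ω (x, y₀) (0, 1) ≠ 0 := by
        rw [← hprojy (x, y₀) (hmk hx hy₀)]; exact hvne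
      have hev1 : ∀ᶠ t in nhds y₀, fderiv ℝ ω (x, t) (0, 1) ≠ 0 := hc3.eventually_ne hne0
      have hev : (fun t => P * Real.exp (-ω (x, t)) + R * Real.exp (ω (x, t)))
          =ᶠ[nhds y₀] (fun _ => (0 : ℝ)) := by
        filter_upwards [hev1, isOpen_Ioo.mem_nhds hy₀] with t h4t ht
        have hvt : ωy (x, t) ≠ 0 := by
          rw [hprojy (x, t) (hmk hx ht)]; exact h4t
        exact claimPR hx ht hvt
      have hzero : HasDerivAt (fun t => P * Real.exp (-ω (x, t)) + R * Real.exp (ω (x, t)))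
          0 y₀ := (hasDerivAt_const y₀ (0 : ℝ)).congr_of_eventuallyEq hev
      have hD := (((hFy hx hy₀).const_mul P).add ((hEy hx hy₀).const_mul R))
      have hvals := hD.unique hzero
      have h5 : ωy (x, y₀) * (R * Real.exp (ω (x, y₀)) - P * Real.exp (-ω (x, y₀))) = 0 := by
        linear_combination hvals
      have h6 := (mul_eq_zero.mp h5).resolve_left hvne
      have hPF : P * Real.exp (-ω (x, y₀)) = 0 := by linarith
      have hRE : R * Real.exp (ω (x, y₀)) = 0 := by linarith
      exact ⟨(mul_eq_zero.mp hPF).resolve_right (Real.exp_ne_zero _),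
        (mul_eq_zero.mp hRE).resolve_right (Real.exp_ne_zero _)⟩
    -- Φ(·, y₀) vanishes, hence G(·, y₀) is constant
    have hΦ0 : ∀ x ∈ Ioo s₁ s₂, auxPhi α β ω ωx ωy x y₀ = 0 := by
      intro x hx
      obtain ⟨hP, hR⟩ := hPR x hx
      have h2X := hfol (x, y₀) (hmk hx hy₀)
      have hef := hEF x y₀
      have hg' : ωy (x, y₀) ^ 2 + deriv α x * Real.exp (-ω (x, y₀))
          - deriv β x * Real.exp (ω (x, y₀))
          + ((α x) ^ 2 * Real.exp (-ω (x, y₀)) ^ 2 + (β x) ^ 2 * Real.exp (ω (x, y₀)) ^ 2) / 4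
          - 3 / 2 * (α x * β x) = auxG α β ω ωy x y₀ := by
        simp only [auxG]
      have hstep : auxPhi α β ω ωx ωy x y₀ =
          (deriv (deriv α) x + auxG α β ω ωy x y₀ * α x + 2 * α x ^ 2 * β x)
              * Real.exp (-ω (x, y₀))
            - (deriv (deriv β) x + auxG α β ω ωy x y₀ * β x + 2 * α x * β x ^ 2)
              * Real.exp (ω (x, y₀)) := by
        simp only [auxPhi]
        linear_combination
          (-(Real.exp (-ω (x, y₀)) * deriv α x) / 2
           - Real.exp (-ω (x, y₀)) ^ 2 * α x ^ 2 / 4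
           - Real.exp (ω (x, y₀)) * deriv β x / 2
           + Real.exp (ω (x, y₀)) ^ 2 * β x ^ 2 / 4) * h2X
          + (Real.exp (-ω (x, y₀)) * α x - Real.exp (ω (x, y₀)) * β x) * hg'
          + (3 * β x * deriv α x / 2 + 3 * α x * deriv β x / 2
             + Real.exp (-ω (x, y₀)) * α x ^ 2 * β x / 2
             - Real.exp (ω (x, y₀)) * α x * β x ^ 2 / 2) * hef
      rw [hstep, hP, hR]; ring
    have hgc : ∀ x ∈ Ioo s₁ s₂, auxG α β ω ωy x y₀ = auxG α β ω ωy x₀ y₀ := by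
      intro x hx
      exact const_of_hasDerivAt_zero_Ioo
        (fun z hz => (hGxD hz hy₀).congr_d (hΦ0 z hz)) hx hx₀
    refine ⟨auxG α β ω ωy x₀ y₀ / 2, ?_⟩
    rintro ⟨x, y⟩ hp
    have h := key1 hp.1 hp.2
    rw [hGconst hp.1 hp.2 hy₀, hgc x hp.1] at h
    rw [h]; ring
end
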